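/- arXiv:1303.0990 — 8 statements merged into one kernel-verified Lean document; each statement's English description precedes it below -/
import Mathlib

section
/- For every signed permutation w in the hyperoctahedral group B_n, the statistic L(w) = (1/2)·#{(i,j) ∈ [−n,n]² : i < j, w(i) > w(j), i ≢ j (mod 2)} is a non-negative integer (i.e., the cardinality of this set is always even). -/
/-! The reflection `(i, j) ↦ (-j, -i)` maps the set defining `L(w)` to itself, because
`w(-j) = -w(j)` preserves the inversion and negation preserves parity. It has no fixed points:
`(-j, -i) = (i, j)` would force `i + j = 0`, so `i ≡ j (mod 2)`. A fixed-point-free involution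
pairs off the elements of a finite set. -/

open Finset Polynomial

def IsSigned (n : ℕ) (w : ℤ → ℤ) : Prop :=
  (∀ j : ℤ, w (-j) = -w j) ∧
    Set.BijOn w (Set.Icc (-(n : ℤ)) n) (Set.Icc (-(n : ℤ)) n)

noncomputable def Lset (n : ℕ) (w : ℤ → ℤ) : Finset (ℤ × ℤ) :=
  (Finset.Icc (-(n : ℤ)) n ×ˢ Finset.Icc (-(n : ℤ)) n).filter
    fun p => p.1 < p.2 ∧ w p.2 < w p.1 ∧ p.1 % 2 ≠ p.2 % 2

noncomputable def Lstat (n : ℕ) (w : ℤ → ℤ) : ℕ := (Lset n w).card / 2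

noncomputable def invStat (n : ℕ) (w : ℤ → ℤ) : ℕ :=
  ((Finset.Icc (1 : ℤ) n ×ˢ Finset.Icc (1 : ℤ) n).filter
    fun p => p.1 < p.2 ∧ w p.2 < w p.1).card

noncomputable def negStat (n : ℕ) (w : ℤ → ℤ) : ℕ :=
  ((Finset.Icc (1 : ℤ) n).filter fun i => w i < 0).card

noncomputable def nspStat (n : ℕ) (w : ℤ → ℤ) : ℕ :=
  ((Finset.Icc (1 : ℤ) n ×ˢ Finset.Icc (1 : ℤ) n).filter
    fun p => p.1 < p.2 ∧ w p.1 + w p.2 < 0).card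

noncomputable def lenStat (n : ℕ) (w : ℤ → ℤ) : ℕ := invStat n w + negStat n w + nspStat n w

noncomputable def Dset (n : ℕ) (w : ℤ → ℤ) : Finset ℤ :=
  (Finset.Ico (0 : ℤ) n).filter fun i => w (i + 1) < w i

abbrev HypOct (n : ℕ) := Equiv.Perm (Fin n) × (Fin n → Bool)

def HypOct.fn {n : ℕ} (w : HypOct n) : ℤ → ℤ := fun j =>
  if h : 1 ≤ j ∧ j ≤ (n : ℤ) then
    (if w.2 ⟨(j - 1).toNat, by omega⟩ then -1 else 1) *
      (((w.1 ⟨(j - 1).toNat, by omega⟩ : Fin n) : ℤ) + 1)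
  else if h' : 1 ≤ -j ∧ -j ≤ (n : ℤ) then
    -((if w.2 ⟨(-j - 1).toNat, by omega⟩ then -1 else 1) *
      (((w.1 ⟨(-j - 1).toNat, by omega⟩ : Fin n) : ℤ) + 1))
  else 0

theorem Finset.even_card_of_involution {ι : Type*} {s : Finset ι} (g : ι → ι)
    (g_mem : ∀ a ∈ s, g a ∈ s) (g_ne : ∀ a ∈ s, g a ≠ a) (g_inv : ∀ a ∈ s, g (g a) = a) :
    Even #s := by
  rw [← ZMod.natCast_eq_zero_iff_even, card_eq_sum_ones, Nat.cast_sum, Nat.cast_one]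
  exact sum_involution (fun a _ => g a) (fun _ _ => by decide) (fun a ha _ => g_ne a ha)
    g_mem g_inv

theorem mem_Lset_iff {n : ℕ} {w : ℤ → ℤ} {p : ℤ × ℤ} :
    p ∈ Lset n w ↔ (-(n : ℤ) ≤ p.1 ∧ p.1 ≤ n) ∧ (-(n : ℤ) ≤ p.2 ∧ p.2 ≤ n) ∧
      p.1 < p.2 ∧ w p.2 < w p.1 ∧ p.1 % 2 ≠ p.2 % 2 := by
  simp only [Lset, mem_filter, mem_product, mem_Icc, and_assoc]

theorem neg_swap_mem_Lset {n : ℕ} {w : ℤ → ℤ} (hw : ∀ j, w (-j) = -w j) {p : ℤ × ℤ}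
    (hp : p ∈ Lset n w) : (-p.2, -p.1) ∈ Lset n w := by
  rw [mem_Lset_iff] at hp ⊢
  obtain ⟨⟨h₁, h₂⟩, ⟨h₃, h₄⟩, hlt, hinv, hpar⟩ := hp
  refine ⟨⟨by omega, by omega⟩, ⟨by omega, by omega⟩, by omega, ?_, by omega⟩
  rw [hw, hw]
  omega

theorem neg_swap_ne_of_mem_Lset {n : ℕ} {w : ℤ → ℤ} {p : ℤ × ℤ} (hp : p ∈ Lset n w) :
    (-p.2, -p.1) ≠ p := by
  intro h
  have hpar := (mem_Lset_iff.mp hp).2.2.2.2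
  have hsum : p.1 = -p.2 := (congrArg Prod.fst h).symm
  omega

/-- For every `w ∈ Bₙ`, the set defining `L(w)` has even cardinality, so
`L(w)` is a (non-negative) integer. -/
theorem L_is_integer (n : ℕ) (w : ℤ → ℤ) (hw : IsSigned n w) :
    2 ∣ (Lset n w).card :=
  even_iff_two_dvd.mp <| Finset.even_card_of_involution (fun p => (-p.2, -p.1))
    (fun _ hp => neg_swap_mem_Lset hw.1 hp) (fun _ hp => neg_swap_ne_of_mem_Lset hp)
    (fun _ _ => by simp)
end

section
/- For every w ∈ B_n, L(w) = a(w) + b(w) + 2c(w), where a(w) = #{odd j ∈ [1,n] : w(j) < 0}, b(w) = #{(j,j') ∈ [1,n]² : j < j', |w(j)| > |w(j')|, j ≢ j' mod 2}, and c(w) = #{(j,j') ∈ [1,n]² : j < j', |w(j)| < |w(j')|, w(j') < 0, j ≢ j' mod 2}. -/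
open Finset Polynomial

noncomputable def aStat (n : ℕ) (w : ℤ → ℤ) : ℕ :=
  ((Finset.Icc (1 : ℤ) n).filter fun j => j % 2 = 1 ∧ w j < 0).card

noncomputable def bStat (n : ℕ) (w : ℤ → ℤ) : ℕ :=
  ((Finset.Icc (1 : ℤ) n ×ˢ Finset.Icc (1 : ℤ) n).filter
    fun p => p.1 < p.2 ∧ |w p.2| < |w p.1| ∧ p.1 % 2 ≠ p.2 % 2).card

noncomputable def cStat (n : ℕ) (w : ℤ → ℤ) : ℕ :=
  ((Finset.Icc (1 : ℤ) n ×ˢ Finset.Icc (1 : ℤ) n).filter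
    fun p => p.1 < p.2 ∧ |w p.1| < |w p.2| ∧ w p.2 < 0 ∧ p.1 % 2 ≠ p.2 % 2).card

/-
The involution `(i, j) ↦ (-j, -i)` preserves the parity-mixed inversions of an odd `w` and has no
fixed points (`i + j` is odd), so `L(w)` counts those with `i + j > 0`. Sorted by the sign of `i`,
these are the parity-mixed inversions inside `[1, n]` (`i > 0`), the odd `j` with `w j < 0`
(`i = 0`), and, after `i ↦ -i`, the parity-mixed pairs `0 < i < j` with `w i + w j < 0` (`i < 0`).
Since `|w|` is injective on `[1, n]`, a pair with values `a, b` contributes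
`[b < a] + [a + b < 0] = [|b| < |a|] + 2 [|a| < |b| ∧ b < 0]` to the last two counts.
-/

lemma card_eq_card_filter_pos_add_card_filter_eq_zero_add_card_filter_neg {α : Type*}
    (s : Finset α) (f : α → ℤ) :
    s.card = (s.filter (0 < f ·)).card + (s.filter (f · = 0)).card +
      (s.filter (f · < 0)).card := by
  simp only [card_eq_sum_ones, sum_filter, ← sum_add_distrib]
  refine sum_congr rfl fun x _ => ?_
  split_ifs <;> omega

lemma ite_lt_add_ite_add_neg_eq_of_abs_ne {a b : ℤ} (h : |a| ≠ |b|) :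
    ((if b < a then 1 else 0) + if a + b < 0 then 1 else 0 : ℕ)
      = (if |b| < |a| then 1 else 0) + 2 * (if |a| < |b| ∧ b < 0 then 1 else 0) := by
  have := abs_nonneg a
  have := abs_nonneg b
  have := abs_choice a
  have := abs_choice b
  split_ifs <;> omega

noncomputable def mixedInvStat (n : ℕ) (w : ℤ → ℤ) : ℕ :=
  ((Finset.Icc (1 : ℤ) n ×ˢ Finset.Icc (1 : ℤ) n).filter
    fun p => p.1 < p.2 ∧ w p.2 < w p.1 ∧ p.1 % 2 ≠ p.2 % 2).card

noncomputable def mixedNspStat (n : ℕ) (w : ℤ → ℤ) : ℕ :=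
  ((Finset.Icc (1 : ℤ) n ×ˢ Finset.Icc (1 : ℤ) n).filter
    fun p => p.1 < p.2 ∧ w p.1 + w p.2 < 0 ∧ p.1 % 2 ≠ p.2 % 2).card

section

variable {n : ℕ} {w : ℤ → ℤ}

lemma mem_Lset {p : ℤ × ℤ} :
    p ∈ Lset n w ↔ (-(n : ℤ) ≤ p.1 ∧ p.1 ≤ n) ∧ (-(n : ℤ) ≤ p.2 ∧ p.2 ≤ n) ∧
      p.1 < p.2 ∧ w p.2 < w p.1 ∧ p.1 % 2 ≠ p.2 % 2 := by
  simp [Lset, and_assoc]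

lemma card_Lset_eq_two_mul (hodd : ∀ j, w (-j) = -w j) :
    (Lset n w).card = 2 * ((Lset n w).filter fun p => 0 < p.1 + p.2).card := by
  have hswap : ((Lset n w).filter fun p => ¬ 0 < p.1 + p.2).card =
      ((Lset n w).filter fun p => 0 < p.1 + p.2).card := by
    apply card_nbij' (fun p => (-p.2, -p.1)) (fun p => (-p.2, -p.1)) <;>
      simp only [coe_filter, Set.MapsTo, Set.LeftInvOn, Set.mem_ofPred_eq, mem_Lset, hodd] <;>
      intros <;> first | omega | simp
  have := card_filter_add_card_filter_not (s := Lset n w) (p := fun p => 0 < p.1 + p.2)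
  omega

lemma card_Lset_filter_pos_sum_fst_pos :
    (((Lset n w).filter fun p => 0 < p.1 + p.2).filter fun p => 0 < p.1).card =
      mixedInvStat n w := by
  unfold mixedInvStat
  congr 1
  ext p
  simp only [mem_filter, mem_Lset, mem_product, mem_Icc]
  omega

lemma card_Lset_filter_pos_sum_fst_eq_zero (hodd : ∀ j, w (-j) = -w j) :
    (((Lset n w).filter fun p => 0 < p.1 + p.2).filter fun p => p.1 = 0).card = aStat n w := by
  have hw0 : w 0 = 0 := by linarith [neg_zero (G := ℤ) ▸ hodd 0]
  apply card_nbij' (fun p => p.2) (fun j => (0, j)) <;>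
    simp only [coe_filter, Set.MapsTo, Set.LeftInvOn, Set.mem_ofPred_eq, mem_filter, mem_Lset,
      mem_Icc]
  · rintro p ⟨⟨⟨-, hbound, hlt, hinv, hpar⟩, -⟩, hfst⟩
    rw [hfst, hw0] at hinv
    omega
  · intro j hj
    simp only [hw0, and_true]
    omega
  · intro p hp
    exact Prod.ext hp.2.symm rfl
  · simp

lemma card_Lset_filter_pos_sum_fst_neg (hodd : ∀ j, w (-j) = -w j) :
    (((Lset n w).filter fun p => 0 < p.1 + p.2).filter fun p => p.1 < 0).card =
      mixedNspStat n w := by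
  apply card_nbij' (fun p => (-p.1, p.2)) (fun p => (-p.1, p.2)) <;>
      simp only [coe_filter, Set.MapsTo, Set.LeftInvOn, Set.mem_ofPred_eq, mem_filter, mem_Lset,
        hodd, mem_product, mem_Icc] <;>
      intros <;> first | omega | simp

lemma card_Lset_filter_pos_sum (hodd : ∀ j, w (-j) = -w j) :
    ((Lset n w).filter fun p => 0 < p.1 + p.2).card =
      mixedInvStat n w + aStat n w + mixedNspStat n w := by
  rw [card_eq_card_filter_pos_add_card_filter_eq_zero_add_card_filter_neg _ Prod.fst,
    card_Lset_filter_pos_sum_fst_pos, card_Lset_filter_pos_sum_fst_eq_zero hodd,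
    card_Lset_filter_pos_sum_fst_neg hodd]

lemma IsSigned.abs_injOn (hw : IsSigned n w) :
    Set.InjOn (fun j => |w j|) (Set.Icc 1 n) := by
  rintro j ⟨hj1, hjn⟩ k ⟨hk1, hkn⟩ h
  rcases abs_eq_abs.mp h with h | h
  · exact hw.2.2.1 ⟨by omega, hjn⟩ ⟨by omega, hkn⟩ h
  · have := hw.2.2.1 (show j ∈ Set.Icc (-(n : ℤ)) n from ⟨by omega, hjn⟩)
      (show -k ∈ Set.Icc (-(n : ℤ)) n from ⟨by omega, by omega⟩) (h.trans (hw.1 k).symm)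
    omega

lemma IsSigned.mixedInvStat_add_mixedNspStat (hw : IsSigned n w) :
    mixedInvStat n w + mixedNspStat n w = bStat n w + 2 * cStat n w := by
  unfold mixedInvStat mixedNspStat bStat cStat
  simp only [card_filter, ← sum_add_distrib, mul_sum]
  refine sum_congr rfl fun p hp => ?_
  simp only [mem_product, mem_Icc] at hp
  by_cases hp' : p.1 < p.2 ∧ p.1 % 2 ≠ p.2 % 2
  · have habs : |w p.1| ≠ |w p.2| := fun h =>
      hp'.1.ne (hw.abs_injOn (by simpa using hp.1) (by simpa using hp.2) h)
    simpa [hp'] using ite_lt_add_ite_add_neg_eq_of_abs_ne habs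
  · split_ifs <;> omega

end

/-- `L(w) = a(w) + b(w) + 2c(w)`. -/
theorem L_eq_a_add_b_add_two_c (n : ℕ) (w : ℤ → ℤ) (hw : IsSigned n w) :
    Lstat n w = aStat n w + bStat n w + 2 * cStat n w := by
  rw [Lstat, card_Lset_eq_two_mul hw.1, Nat.mul_div_cancel_left _ two_pos,
    card_Lset_filter_pos_sum hw.1, add_right_comm, hw.mixedInvStat_add_mixedNspStat]
  ring
end

section
/- Let w ∈ B_n and let σ(w) = (w₁, w₂), where w₁ ∈ B_{⌈n/2⌉} is the signed permutation obtained by restricting w to odd-indexed columns (and their corresponding rows) and w₂ ∈ B_{⌊n/2⌋} is obtained from the even-indexed columns. Then L(w) = neg(w₁) + l(w) − l(w₁) − l(w₂), where l denotes the Coxeter length of type B and neg(v) = #{i : v(i) < 0}. -/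
open Finset Polynomial

/-- The rank of `|w(2a-1)|` among the absolute values in the odd-indexed columns. -/
noncomputable def oddRank (n : ℕ) (w : ℤ → ℤ) (a : ℤ) : ℕ :=
  ((Finset.Icc (1 : ℤ) (((n + 1) / 2 : ℕ) : ℤ)).filter
    fun b => |w (2 * b - 1)| ≤ |w (2 * a - 1)|).card

/-- The rank of `|w(2a)|` among the absolute values in the even-indexed columns. -/
noncomputable def evenRank (n : ℕ) (w : ℤ → ℤ) (a : ℤ) : ℕ :=
  ((Finset.Icc (1 : ℤ) ((n / 2 : ℕ) : ℤ)).filter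
    fun b => |w (2 * b)| ≤ |w (2 * a)|).card

/-- The signed permutation `w₁` of size `⌈n/2⌉` obtained from the odd-indexed
columns of `w` (and the corresponding rows). -/
noncomputable def oddPart (n : ℕ) (w : ℤ → ℤ) : ℤ → ℤ := fun a =>
  (if w (2 * a - 1) < 0 then -1 else 1) * (oddRank n w a : ℤ)

/-- The signed permutation `w₂` of size `⌊n/2⌋` obtained from the even-indexed
columns of `w` (and the corresponding rows). -/
noncomputable def evenPart (n : ℕ) (w : ℤ → ℤ) : ℤ → ℤ := fun a =>
  (if w (2 * a) < 0 then -1 else 1) * (evenRank n w a : ℤ)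

open scoped Pointwise

/-!
View `w` as a permutation of the positions `[-n, n]` and count its inversions. On a symmetric set
of positions `-P ∪ P` with `P` positive, `w (-j) = -w j` matches the inversions inside `-P` with
those inside `P`, and the inversions `(-a, b)` with `a, b ∈ P` are the pairs with `w a + w b < 0`,
which number `2 nsp + neg`; the position `0` adds `2 neg` more. The signed permutations `w₁`, `w₂`
have the relative order, signs and signs of sums of `w` on the odd, resp. even, positions. So the
inversions of `w` within the odd positions, within the even positions and overall number
`2 l(w₁) - neg(w₁)`, `2 l(w₂) + neg(w₂)` and `2 l(w) + neg(w)`; the rest are the inversions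
between positions of different parity, of which there are `2 L(w)`.
-/

lemma disjoint_neg_self {P : Finset ℤ} (hP : ∀ i ∈ P, 0 < i) : Disjoint (-P) P :=
  disjoint_left.2 fun i hi hi' => by
    have := hP _ (mem_neg'.1 hi); have := hP _ hi'; omega

section Inversions

variable (w : ℤ → ℤ)

def invBetween (A B : Finset ℤ) : ℕ := #{p ∈ A ×ˢ B | p.1 < p.2 ∧ w p.2 < w p.1}

def nspOn (P : Finset ℤ) : ℕ := #{p ∈ P ×ˢ P | p.1 < p.2 ∧ w p.1 + w p.2 < 0}

def negOn (P : Finset ℤ) : ℕ := #{i ∈ P | w i < 0}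

variable {w}

lemma invBetween_union_left {A A' : Finset ℤ} (B : Finset ℤ) (h : Disjoint A A') :
    invBetween w (A ∪ A') B = invBetween w A B + invBetween w A' B := by
  rw [invBetween, union_product, filter_union, card_union_of_disjoint]
  · rfl
  · exact disjoint_filter_filter (disjoint_product.2 (Or.inl h))

lemma invBetween_union_right (A : Finset ℤ) {B B' : Finset ℤ} (h : Disjoint B B') :
    invBetween w A (B ∪ B') = invBetween w A B + invBetween w A B' := by
  rw [invBetween, product_union, filter_union, card_union_of_disjoint]
  · rfl
  · exact disjoint_filter_filter (disjoint_product.2 (Or.inr h))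

lemma invBetween_eq_zero {A B : Finset ℤ} (h : ∀ a ∈ A, ∀ b ∈ B, b ≤ a) :
    invBetween w A B = 0 := by
  rw [invBetween, card_eq_zero, filter_eq_empty_iff]
  rintro ⟨a, b⟩ hab ⟨hlt, -⟩
  rw [mem_product] at hab
  exact (h a hab.1 b hab.2).not_gt hlt

lemma invBetween_self_filter_split (S : Finset ℤ) (p : ℤ → Prop) [DecidablePred p] :
    invBetween w S S = invBetween w {x ∈ S | p x} {x ∈ S | p x}
      + invBetween w {x ∈ S | ¬p x} {x ∈ S | ¬p x}
      + (invBetween w {x ∈ S | p x} {x ∈ S | ¬p x}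
        + invBetween w {x ∈ S | ¬p x} {x ∈ S | p x}) := by
  have hdisj := disjoint_filter_filter_not S S p
  conv_lhs => rw [← filter_union_filter_not_eq p S]
  rw [invBetween_union_left _ hdisj, invBetween_union_right _ hdisj,
    invBetween_union_right _ hdisj]
  ring

lemma negOn_union {A B : Finset ℤ} (h : Disjoint A B) :
    negOn w (A ∪ B) = negOn w A + negOn w B := by
  rw [negOn, filter_union, card_union_of_disjoint (disjoint_filter_filter h)]
  rfl

lemma card_add_neg_eq_two_mul_nspOn_add_negOn (P : Finset ℤ) :
    #{p ∈ P ×ˢ P | w p.1 + w p.2 < 0} = 2 * nspOn w P + negOn w P := by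
  set S := {p ∈ P ×ˢ P | w p.1 + w p.2 < 0}
  have hlt : #{p ∈ S | p.1 < p.2} = nspOn w P := by
    rw [filter_filter, nspOn]
    exact congrArg card (filter_congr fun _ _ => and_comm)
  have hgt : #{p ∈ S | p.2 < p.1} = nspOn w P := by
    rw [← hlt]
    apply card_nbij' Prod.swap Prod.swap
    · rintro ⟨i, j⟩ h
      simp only [S, mem_coe, mem_filter, mem_product, Prod.swap] at h ⊢
      grind
    · rintro ⟨i, j⟩ h
      simp only [S, mem_coe, mem_filter, mem_product, Prod.swap] at h ⊢
      grind
    all_goals intro p _; simp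
  have hdiag : #{p ∈ S | p.1 = p.2} = negOn w P := by
    apply card_nbij' Prod.fst (fun i => (i, i))
    · rintro ⟨i, j⟩ h
      simp only [S, mem_coe, mem_filter, mem_product] at h ⊢
      grind
    · intro i h
      simp only [S, mem_coe, mem_filter, mem_product] at h ⊢
      grind
    · rintro ⟨i, j⟩ h
      simp only [S, mem_coe, mem_filter] at h
      simp [h.2]
    · intro i _; rfl
  have htri : #S = #{p ∈ S | p.1 < p.2} + #{p ∈ S | p.2 < p.1} + #{p ∈ S | p.1 = p.2} := by
    rw [card_eq_sum_ones S, card_filter, card_filter, card_filter, ← sum_add_distrib,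
      ← sum_add_distrib]
    refine sum_congr rfl fun p _ => ?_
    split_ifs <;> omega
  omega

variable (hodd : ∀ j, w (-j) = -w j)
include hodd

lemma invBetween_neg_neg (A B : Finset ℤ) : invBetween w (-B) (-A) = invBetween w A B := by
  apply card_nbij' (fun p => (-p.2, -p.1)) (fun p => (-p.2, -p.1))
  · rintro ⟨i, j⟩ h
    simp only [mem_coe, mem_filter, mem_product, mem_neg', hodd] at h ⊢
    grind
  · rintro ⟨i, j⟩ h
    simp only [mem_coe, mem_filter, mem_product, mem_neg', neg_neg, hodd] at h ⊢
    grind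
  all_goals intro p _; simp

lemma invBetween_neg_self {P : Finset ℤ} (hP : ∀ i ∈ P, 0 < i) :
    invBetween w (-P) P = 2 * nspOn w P + negOn w P := by
  rw [← card_add_neg_eq_two_mul_nspOn_add_negOn]
  apply card_nbij' (fun p => (-p.1, p.2)) (fun p => (-p.1, p.2))
  · rintro ⟨i, j⟩ h
    simp only [mem_coe, mem_filter, mem_product, mem_neg', hodd] at h ⊢
    grind
  · rintro ⟨i, j⟩ h
    simp only [mem_coe, mem_filter, mem_product, mem_neg', neg_neg, hodd] at h ⊢
    have := hP i h.1.1
    have := hP j h.1.2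
    grind
  all_goals intro p _; simp

lemma invBetween_singleton_zero_left {P : Finset ℤ} (hP : ∀ i ∈ P, 0 < i) :
    invBetween w {0} P = negOn w P := by
  have hw0 : w 0 = 0 := by have := hodd 0; rw [neg_zero] at this; omega
  apply card_nbij' Prod.snd (fun i => (0, i))
  · rintro ⟨i, j⟩ h
    simp only [mem_coe, mem_filter, mem_product, mem_singleton] at h ⊢
    grind
  · intro i h
    simp only [mem_coe, mem_filter, mem_product, mem_singleton] at h ⊢
    grind
  · rintro ⟨i, j⟩ h
    simp only [mem_coe, mem_filter, mem_product, mem_singleton] at h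
    simp [h.1.1]
  · intro i _; rfl

lemma invBetween_neg_union_self {P : Finset ℤ} (hP : ∀ i ∈ P, 0 < i) :
    invBetween w (-P ∪ P) (-P ∪ P) = 2 * invBetween w P P + 2 * nspOn w P + negOn w P := by
  have hdisj := disjoint_neg_self hP
  rw [invBetween_union_left _ hdisj, invBetween_union_right _ hdisj,
    invBetween_union_right _ hdisj, invBetween_neg_neg hodd, invBetween_neg_self hodd hP,
    invBetween_eq_zero (A := P) (B := -P) fun a ha b hb => by
      have := hP _ ha; have := hP _ (mem_neg'.1 hb); omega]
  ring

lemma invBetween_insert_zero_neg_union_self {P : Finset ℤ} (hP : ∀ i ∈ P, 0 < i) :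
    invBetween w (insert 0 (-P ∪ P)) (insert 0 (-P ∪ P))
      = 2 * invBetween w P P + 2 * nspOn w P + 3 * negOn w P := by
  have hdisj := disjoint_neg_self hP
  have hzero : Disjoint {0} (-P ∪ P) := by
    simp only [disjoint_singleton_left, mem_union, mem_neg', not_or]
    exact ⟨fun h => (hP _ h).ne' neg_zero.symm, fun h => (hP _ h).ne' rfl⟩
  have hzero_neg : invBetween w (-P) {0} = negOn w P := by
    rw [← invBetween_singleton_zero_left hodd hP, ← invBetween_neg_neg hodd, neg_singleton,
      neg_zero, neg_neg]
  rw [insert_eq, invBetween_union_left _ hzero, invBetween_union_right _ hzero,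
    invBetween_union_right _ hzero, invBetween_union_right _ hdisj,
    invBetween_union_left _ hdisj, invBetween_neg_union_self hodd hP,
    invBetween_singleton_zero_left hodd hP, hzero_neg,
    invBetween_eq_zero (A := {0}) (B := {0}) (by simp),
    invBetween_eq_zero (A := {0}) (B := -P) fun a ha b hb => by
      have := hP _ (mem_neg'.1 hb); rw [mem_singleton] at ha; omega,
    invBetween_eq_zero (A := P) (B := {0}) fun a ha b hb => by
      have := hP _ ha; rw [mem_singleton] at hb; omega]
  ring

end Inversions

section Flatten

variable (A : Finset ℤ) (u : ℤ → ℤ)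

def absRank (a : ℤ) : ℕ := #{b ∈ A | |u b| ≤ |u a|}

/-- `oddPart n w` and `evenPart n w` are, by definition, `flatten (Icc 1 m)` applied to
`w ∘ (2 · - 1)` and `w ∘ (2 ·)`. -/
def flatten (a : ℤ) : ℤ := (if u a < 0 then -1 else 1) * (absRank A u a : ℤ)

variable {A u}

lemma absRank_pos {a : ℤ} (ha : a ∈ A) : 0 < absRank A u a :=
  card_pos.2 ⟨a, mem_filter.2 ⟨ha, le_rfl⟩⟩

lemma absRank_lt_absRank_iff {a b : ℤ} (hb : b ∈ A) :
    absRank A u a < absRank A u b ↔ |u a| < |u b| := by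
  constructor
  · intro h
    by_contra! hba
    exact h.not_ge (card_le_card fun c hc => mem_filter.2
      ⟨(mem_filter.1 hc).1, (mem_filter.1 hc).2.trans hba⟩)
  · intro h
    refine card_lt_card ((ssubset_iff_of_subset fun c hc => mem_filter.2
      ⟨(mem_filter.1 hc).1, (mem_filter.1 hc).2.trans h.le⟩).2 ⟨b, ?_, ?_⟩)
    · exact mem_filter.2 ⟨hb, le_rfl⟩
    · exact fun hb' => (mem_filter.1 hb').2.not_gt h

lemma flatten_neg_iff {a : ℤ} (ha : a ∈ A) : flatten A u a < 0 ↔ u a < 0 := by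
  have := absRank_pos (u := u) ha
  unfold flatten
  split_ifs <;> omega

lemma flatten_lt_flatten_iff {a b : ℤ} (ha : a ∈ A) (hb : b ∈ A) :
    flatten A u a < flatten A u b ↔ u a < u b := by
  have hab := absRank_lt_absRank_iff (u := u) (a := a) hb
  have hba := absRank_lt_absRank_iff (u := u) (a := b) ha
  have := absRank_pos (u := u) ha
  have := absRank_pos (u := u) hb
  simp only [abs_eq_max_neg] at hab hba
  unfold flatten
  split_ifs <;> omega

lemma flatten_add_flatten_neg_iff {a b : ℤ} (ha : a ∈ A) (hb : b ∈ A) :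
    flatten A u a + flatten A u b < 0 ↔ u a + u b < 0 := by
  have hab := absRank_lt_absRank_iff (u := u) (a := a) hb
  have hba := absRank_lt_absRank_iff (u := u) (a := b) ha
  have := absRank_pos (u := u) ha
  have := absRank_pos (u := u) hb
  simp only [abs_eq_max_neg] at hab hba
  unfold flatten
  split_ifs <;> omega

lemma invBetween_flatten : invBetween (flatten A u) A A = invBetween u A A := by
  refine congrArg card (filter_congr fun p hp => ?_)
  rw [mem_product] at hp
  rw [flatten_lt_flatten_iff hp.2 hp.1]

lemma nspOn_flatten : nspOn (flatten A u) A = nspOn u A := by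
  refine congrArg card (filter_congr fun p hp => ?_)
  rw [mem_product] at hp
  rw [flatten_add_flatten_neg_iff hp.1 hp.2]

lemma negOn_flatten : negOn (flatten A u) A = negOn u A :=
  congrArg card (filter_congr fun _ ha => flatten_neg_iff ha)

end Flatten

section Reindex

variable {w f : ℤ → ℤ}

lemma invBetween_comp (hf : StrictMono f) (A B : Finset ℤ) :
    invBetween (w ∘ f) A B = invBetween w (A.image f) (B.image f) := by
  rw [invBetween, invBetween, ← prodMap_image_product, filter_image,
    card_image_of_injective _ (hf.injective.prodMap hf.injective)]
  simp only [Prod.map_fst, Prod.map_snd, hf.lt_iff_lt, Function.comp_apply]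

lemma nspOn_comp (hf : StrictMono f) (A : Finset ℤ) :
    nspOn (w ∘ f) A = nspOn w (A.image f) := by
  rw [nspOn, nspOn, ← prodMap_image_product, filter_image,
    card_image_of_injective _ (hf.injective.prodMap hf.injective)]
  simp only [Prod.map_fst, Prod.map_snd, hf.lt_iff_lt, Function.comp_apply]

lemma negOn_comp (hf : Function.Injective f) (A : Finset ℤ) :
    negOn (w ∘ f) A = negOn w (A.image f) := by
  rw [negOn, negOn, filter_image, card_image_of_injective _ hf]
  rfl

end Reindex

lemma lenStat_flatten_comp {w f : ℤ → ℤ} (hf : StrictMono f) (m : ℕ) :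
    lenStat m (flatten (Icc 1 (m : ℤ)) (w ∘ f))
      = invBetween w ((Icc 1 (m : ℤ)).image f) ((Icc 1 (m : ℤ)).image f)
        + negOn w ((Icc 1 (m : ℤ)).image f) + nspOn w ((Icc 1 (m : ℤ)).image f) := by
  change invBetween _ _ _ + negOn _ _ + nspOn _ _ = _
  rw [invBetween_flatten, negOn_flatten, nspOn_flatten, invBetween_comp hf,
    negOn_comp hf.injective, nspOn_comp hf]

lemma negStat_flatten_comp {w f : ℤ → ℤ} (hf : Function.Injective f) (m : ℕ) :
    negStat m (flatten (Icc 1 (m : ℤ)) (w ∘ f)) = negOn w ((Icc 1 (m : ℤ)).image f) := by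
  change negOn _ _ = _
  rw [negOn_flatten, negOn_comp hf]

noncomputable def oddPos (n : ℕ) : Finset ℤ := {x ∈ Icc 1 (n : ℤ) | x % 2 = 1}

noncomputable def evenPos (n : ℕ) : Finset ℤ := {x ∈ Icc 1 (n : ℤ) | x % 2 = 0}

lemma image_two_mul_sub_one_Icc (n : ℕ) :
    (Icc 1 (((n + 1) / 2 : ℕ) : ℤ)).image (fun a => 2 * a - 1) = oddPos n := by
  ext x
  simp only [oddPos, mem_image, mem_filter, mem_Icc]
  constructor
  · rintro ⟨a, ha, rfl⟩; omega
  · intro hx; exact ⟨(x + 1) / 2, by omega, by omega⟩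

lemma image_two_mul_Icc (n : ℕ) :
    (Icc 1 ((n / 2 : ℕ) : ℤ)).image (fun a => 2 * a) = evenPos n := by
  ext x
  simp only [evenPos, mem_image, mem_filter, mem_Icc]
  constructor
  · rintro ⟨a, ha, rfl⟩; omega
  · intro hx; exact ⟨x / 2, by omega, by omega⟩

section Parity

variable (n : ℕ) (w : ℤ → ℤ)

lemma lenStat_oddPart :
    lenStat ((n + 1) / 2) (oddPart n w)
      = invBetween w (oddPos n) (oddPos n) + negOn w (oddPos n) + nspOn w (oddPos n) := by
  rw [← image_two_mul_sub_one_Icc]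
  exact lenStat_flatten_comp (fun a b h => by omega) _

lemma negStat_oddPart :
    negStat ((n + 1) / 2) (oddPart n w) = negOn w (oddPos n) := by
  rw [← image_two_mul_sub_one_Icc]
  exact negStat_flatten_comp (fun a b h => by omega) _

lemma lenStat_evenPart :
    lenStat (n / 2) (evenPart n w)
      = invBetween w (evenPos n) (evenPos n) + negOn w (evenPos n) + nspOn w (evenPos n) := by
  rw [← image_two_mul_Icc]
  exact lenStat_flatten_comp (fun a b h => by omega) _

lemma negStat_eq_negOn_odd_add_negOn_even :
    negStat n w
      = negOn w (oddPos n) + negOn w (evenPos n) := by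
  have hsplit : Icc 1 (n : ℤ) = oddPos n ∪ evenPos n := by
    ext x; simp only [oddPos, evenPos, mem_union, mem_filter, mem_Icc]; omega
  have hdisj : Disjoint (oddPos n) (evenPos n) :=
    disjoint_filter.2 fun x _ h1 h2 => by omega
  rw [← negOn_union hdisj, ← hsplit]
  rfl

lemma card_Lset :
    #(Lset n w)
      = invBetween w {x ∈ Icc (-n : ℤ) n | x % 2 = 1} {x ∈ Icc (-n : ℤ) n | ¬x % 2 = 1}
        + invBetween w {x ∈ Icc (-n : ℤ) n | ¬x % 2 = 1}
            {x ∈ Icc (-n : ℤ) n | x % 2 = 1} := by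
  rw [invBetween, invBetween, ← card_union_of_disjoint, ← filter_union]
  · congr 1
    ext ⟨i, j⟩
    simp only [Lset, mem_filter, mem_union, mem_product, mem_Icc]
    omega
  · exact disjoint_filter_filter
      (disjoint_product.2 (Or.inl (disjoint_filter_filter_not _ _ _)))

variable {w} (hodd : ∀ j, w (-j) = -w j)
include hodd

lemma invBetween_Icc_neg :
    invBetween w (Icc (-n : ℤ) n) (Icc (-n : ℤ) n)
      = 2 * invStat n w + 2 * nspStat n w + 3 * negStat n w := by
  have : Icc (-n : ℤ) n = insert 0 (-Icc 1 (n : ℤ) ∪ Icc 1 (n : ℤ)) := by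
    ext x; simp only [mem_insert, mem_union, mem_neg', mem_Icc]; omega
  rw [this, invBetween_insert_zero_neg_union_self hodd
    (by intro i hi; simp only [mem_Icc] at hi; omega)]
  rfl

lemma invBetween_filter_odd :
    invBetween w {x ∈ Icc (-n : ℤ) n | x % 2 = 1} {x ∈ Icc (-n : ℤ) n | x % 2 = 1}
      = 2 * invBetween w (oddPos n) (oddPos n) + 2 * nspOn w (oddPos n) + negOn w (oddPos n) := by
  have : {x ∈ Icc (-n : ℤ) n | x % 2 = 1} = -oddPos n ∪ oddPos n := by
    ext x; simp only [oddPos, mem_filter, mem_union, mem_neg', mem_Icc]; omega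
  rw [this, invBetween_neg_union_self hodd
    (by intro i hi; simp only [oddPos, mem_filter, mem_Icc] at hi; omega)]

lemma invBetween_filter_not_odd :
    invBetween w {x ∈ Icc (-n : ℤ) n | ¬x % 2 = 1} {x ∈ Icc (-n : ℤ) n | ¬x % 2 = 1}
      = 2 * invBetween w (evenPos n) (evenPos n) + 2 * nspOn w (evenPos n)
        + 3 * negOn w (evenPos n) := by
  have : {x ∈ Icc (-n : ℤ) n | ¬x % 2 = 1} = insert 0 (-evenPos n ∪ evenPos n) := by
    ext x; simp only [evenPos, mem_insert, mem_filter, mem_union, mem_neg', mem_Icc]; omega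
  rw [this, invBetween_insert_zero_neg_union_self hodd
    (by intro i hi; simp only [evenPos, mem_filter, mem_Icc] at hi; omega)]

end Parity

/-- `L(w) = neg(w₁) + l(w) − l(w₁) − l(w₂)`. -/
theorem L_eq_neg_add_len_sub (n : ℕ) (w : ℤ → ℤ) (hw : IsSigned n w) :
    (Lstat n w : ℤ) =
      (negStat ((n + 1) / 2) (oddPart n w) : ℤ) + (lenStat n w : ℤ)
        - (lenStat ((n + 1) / 2) (oddPart n w) : ℤ)
        - (lenStat (n / 2) (evenPart n w) : ℤ) := by
  have hsplit := invBetween_self_filter_split (w := w) (Icc (-n : ℤ) n) (· % 2 = 1)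
  rw [invBetween_Icc_neg n hw.1, invBetween_filter_odd n hw.1, invBetween_filter_not_odd n hw.1,
    ← card_Lset] at hsplit
  have hneg := negStat_eq_negOn_odd_add_negOn_even n w
  have h1 := lenStat_oddPart n w
  have h2 := negStat_oddPart n w
  have h3 := lenStat_evenPart n w
  unfold Lstat lenStat at *
  omega
end

section
/- On B_n the equality inv + nsp = b̄ + 2c̄ holds, where b̄(w) = #{(j,j') ∈ [1,n]² : j < j', |w(j)| > |w(j')|} and c̄(w) = #{(j,j') ∈ [1,n]² : j < j', |w(j)| < |w(j')|, w(j') < 0}. -/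
open Finset Polynomial

noncomputable def bbarStat (n : ℕ) (w : ℤ → ℤ) : ℕ :=
  ((Finset.Icc (1 : ℤ) n ×ˢ Finset.Icc (1 : ℤ) n).filter
    fun p => p.1 < p.2 ∧ |w p.2| < |w p.1|).card

noncomputable def cbarStat (n : ℕ) (w : ℤ → ℤ) : ℕ :=
  ((Finset.Icc (1 : ℤ) n ×ˢ Finset.Icc (1 : ℤ) n).filter
    fun p => p.1 < p.2 ∧ |w p.1| < |w p.2| ∧ w p.2 < 0).card

/-! Both sides count pairs `i < j` in `[1, n]` by an indicator depending only on `(w i, w j)`.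
Since `w` is a signed permutation, `|w i| ≠ |w j|` for `i ≠ j`, and a case split on the signs
of `w i` and `w j` shows that the two summands agree pair by pair. -/

lemma inv_add_nsp_indicator_eq {a b : ℤ} (hab : |a| ≠ |b|) :
    ((if b < a then 1 else 0) + (if a + b < 0 then 1 else 0) : ℕ) =
      (if |b| < |a| then 1 else 0) + 2 * (if |a| < |b| ∧ b < 0 then 1 else 0) := by
  rcases abs_cases a with ⟨ha, _⟩ | ⟨ha, _⟩ <;> rcases abs_cases b with ⟨hb, _⟩ | ⟨hb, _⟩ <;>
    rw [ha, hb] at hab ⊢ <;> split_ifs <;> omega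

lemma IsSigned.injOn_abs {n : ℕ} {w : ℤ → ℤ} (hw : IsSigned n w) :
    Set.InjOn (fun i => |w i|) (Set.Icc 1 n) := by
  intro i hi j hj hij
  have hmem : ∀ k ∈ Set.Icc (1 : ℤ) n, k ∈ Set.Icc (-(n : ℤ)) n ∧ -k ∈ Set.Icc (-(n : ℤ)) n :=
    fun k ⟨h1, h2⟩ => ⟨⟨by omega, h2⟩, ⟨by omega, by omega⟩⟩
  rcases abs_eq_abs.mp hij with h | h
  · exact hw.2.2.1 (hmem i hi).1 (hmem j hj).1 h
  · rw [← hw.1 j] at h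
    have := hw.2.2.1 (hmem i hi).1 (hmem j hj).2 h
    simp only [Set.mem_Icc] at hi hj
    omega

/-- On `Bₙ` one has `inv + nsp = b̄ + 2c̄`. -/
theorem inv_add_nsp_eq (n : ℕ) (w : ℤ → ℤ) (hw : IsSigned n w) :
    invStat n w + nspStat n w = bbarStat n w + 2 * cbarStat n w := by
  simp only [invStat, nspStat, bbarStat, cbarStat, Finset.card_filter]
  rw [← Finset.sum_add_distrib, Finset.mul_sum, ← Finset.sum_add_distrib]
  refine Finset.sum_congr rfl fun ⟨i, j⟩ hp => ?_
  simp only [Finset.mem_product, Finset.mem_Icc] at hp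
  by_cases hij : i < j
  · simp only [hij, true_and]
    exact inv_add_nsp_indicator_eq <| hw.injOn_abs.ne hp.1 hp.2 hij.ne
  · simp only [hij, false_and, if_false, add_zero, mul_zero]
end

section
/- The identity is the unique element w ∈ B_n with L(w) = 0, and consequently the longest element w₀ = −Id is the unique element of B_n attaining the maximum value L(w₀) = n(n+1)/2. -/
open Finset Polynomial

/-! Every pair counted in `Lset` is one of the `n(n+1)` pairs `i < j` of opposite parity in
`[-n, n]`, and these pairs come in couples `(x, y)`, `(-y, -x)`, so `L(w) = 0` exactly when `w`
has no opposite-parity inversion. Then `w (i + 1) > w i` for all consecutive `i`, which forces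
`w = id`. Dually, `-w` inverts precisely the opposite-parity pairs that `w` does not, so `L(w)` is
maximal exactly when `L(-w) = 0`, i.e. `w = -id`. -/

noncomputable def oppParityPairs (n : ℕ) : Finset (ℤ × ℤ) :=
  (Icc (-(n : ℤ)) n ×ˢ Icc (-(n : ℤ)) n).filter fun p => p.1 < p.2 ∧ p.1 % 2 ≠ p.2 % 2

-- Such a pair is `{2a - n, 2b - n - 1}` for unique `a ∈ [0, n]` and `b ∈ [1, n]`.
theorem card_oppParityPairs (n : ℕ) : (oppParityPairs n).card = n * (n + 1) := by
  have : (oppParityPairs n).card = (Icc (0 : ℤ) n ×ˢ Icc (1 : ℤ) n).card := by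
    refine card_nbij'
      (fun p => if (p.1 + n) % 2 = 0 then ((p.1 + n) / 2, (p.2 + n + 1) / 2)
        else ((p.2 + n) / 2, (p.1 + n + 1) / 2))
      (fun q => (min (2 * q.1 - n) (2 * q.2 - n - 1), max (2 * q.1 - n) (2 * q.2 - n - 1)))
      ?_ ?_ ?_ ?_ <;>
    · rintro ⟨i, j⟩ h
      simp only [oppParityPairs, mem_coe, mem_filter, mem_product, mem_Icc, Prod.mk.injEq,
        min_def, max_def] at h ⊢
      split_ifs <;> (try simp only [Prod.ext_iff]) <;> omega
  simp [this, mul_comm]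

theorem Lset_subset_oppParityPairs (n : ℕ) (w : ℤ → ℤ) : Lset n w ⊆ oppParityPairs n :=
  fun p hp => by
    simp only [Lset, oppParityPairs, mem_filter] at hp ⊢
    exact ⟨hp.1, hp.2.1, hp.2.2.2⟩

theorem Lset_neg {n : ℕ} {w : ℤ → ℤ} (hinj : Set.InjOn w (Set.Icc (-(n : ℤ)) n)) :
    Lset n (-w) = oppParityPairs n \ Lset n w := by
  ext ⟨x, y⟩
  simp only [Lset, oppParityPairs, mem_sdiff, mem_filter, mem_product, mem_Icc, Pi.neg_apply,
    neg_lt_neg_iff]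
  constructor
  · rintro ⟨hxy, hlt, hwlt, hpar⟩
    exact ⟨⟨hxy, hlt, hpar⟩, fun h => h.2.2.1.asymm hwlt⟩
  · rintro ⟨⟨hxy, hlt, hpar⟩, hnot⟩
    have hne : w x ≠ w y := fun h => hlt.ne (hinj hxy.1 hxy.2 h)
    exact ⟨hxy, hlt, lt_of_le_of_ne (not_lt.1 fun h => hnot ⟨hxy, hlt, h, hpar⟩) hne, hpar⟩

theorem neg_swap_mem_Lset_s5 {n : ℕ} {w : ℤ → ℤ} (hodd : ∀ j, w (-j) = -w j) {x y : ℤ}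
    (h : (x, y) ∈ Lset n w) : (-y, -x) ∈ Lset n w := by
  simp only [Lset, mem_filter, mem_product, mem_Icc] at h ⊢
  rw [hodd, hodd]
  omega

-- `(x, y) ↦ (-y, -x)` has no fixed point on `Lset`, since `x` and `-x` have the same parity.
theorem Lstat_eq_zero_iff {n : ℕ} {w : ℤ → ℤ} (hodd : ∀ j, w (-j) = -w j) :
    Lstat n w = 0 ↔ Lset n w = ∅ := by
  refine ⟨fun h => eq_empty_iff_forall_notMem.2 fun ⟨x, y⟩ hxy => ?_,
    fun h => by simp [Lstat, h]⟩
  have hpair : 1 < (Lset n w).card := by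
    refine one_lt_card.2 ⟨_, hxy, _, neg_swap_mem_Lset_s5 hodd hxy, fun he => ?_⟩
    simp only [Lset, mem_filter, Prod.mk.injEq] at hxy he
    omega
  simp only [Lstat] at h
  omega

theorem Lstat_le (n : ℕ) (w : ℤ → ℤ) : Lstat n w ≤ n * (n + 1) / 2 :=
  Nat.div_le_div_right (card_oppParityPairs n ▸ card_le_card (Lset_subset_oppParityPairs n w))

theorem Lstat_eq_iff_Lset_eq (n : ℕ) (w : ℤ → ℤ) :
    Lstat n w = n * (n + 1) / 2 ↔ Lset n w = oppParityPairs n := by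
  refine ⟨fun h => eq_of_subset_of_card_le (Lset_subset_oppParityPairs n w) ?_,
    fun h => by rw [Lstat, h, card_oppParityPairs]⟩
  have hle := card_le_card (Lset_subset_oppParityPairs n w)
  have heven : n * (n + 1) % 2 = 0 := Nat.even_iff.1 (Nat.even_mul_succ_self n)
  rw [card_oppParityPairs] at hle ⊢
  simp only [Lstat] at h
  omega

theorem le_apply_of_lt_apply_succ {a b : ℤ} {w : ℤ → ℤ}
    (hmaps : ∀ j ∈ Set.Icc a b, a ≤ w j)
    (hstep : ∀ i ∈ Set.Ico a b, w i < w (i + 1)) : ∀ j ∈ Set.Icc a b, j ≤ w j := by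
  rintro j ⟨haj, hjb⟩
  induction j, haj using Int.leInduction with
  | base => exact hmaps a ⟨le_rfl, hjb⟩
  | succ i hai ih =>
    have := hstep i ⟨hai, by omega⟩
    have := ih (by omega)
    omega

theorem lt_apply_succ_of_Lset_eq_empty {n : ℕ} {w : ℤ → ℤ}
    (hinj : Set.InjOn w (Set.Icc (-(n : ℤ)) n)) (h : Lset n w = ∅) :
    ∀ i ∈ Set.Ico (-(n : ℤ)) n, w i < w (i + 1) := by
  rintro i ⟨h1, h2⟩
  have hi : i ∈ Set.Icc (-(n : ℤ)) n := ⟨h1, h2.le⟩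
  have hi' : i + 1 ∈ Set.Icc (-(n : ℤ)) n := ⟨by omega, h2⟩
  have hne : w i ≠ w (i + 1) := fun he => by have := hinj hi hi' he; omega
  refine lt_of_le_of_ne (not_lt.1 fun hlt => ?_) hne
  have hmem : (i, i + 1) ∈ Lset n w := by
    simp only [Lset, mem_filter, mem_product, mem_Icc]
    exact ⟨⟨hi, hi'⟩, by omega, hlt, by omega⟩
  simp [h] at hmem

theorem IsSigned.Lset_eq_empty_iff {n : ℕ} {w : ℤ → ℤ} (hw : IsSigned n w) :
    Lset n w = ∅ ↔ ∀ j ∈ Set.Icc (-(n : ℤ)) n, w j = j := by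
  obtain ⟨hodd, hbij⟩ := hw
  constructor
  · intro h j hj
    have hge := le_apply_of_lt_apply_succ (fun j hj => (hbij.mapsTo hj).1)
      (lt_apply_succ_of_Lset_eq_empty hbij.injOn h)
    have hlow := hge j hj
    have hup := hge (-j) ⟨by linarith [hj.2], by linarith [hj.1]⟩
    rw [hodd] at hup
    omega
  · intro hid
    refine eq_empty_iff_forall_notMem.2 fun ⟨x, y⟩ hxy => ?_
    simp only [Lset, mem_filter, mem_product] at hxy
    rw [hid x (mem_Icc.1 hxy.1.1), hid y (mem_Icc.1 hxy.1.2)] at hxy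
    exact hxy.2.2.1.asymm hxy.2.1

theorem IsSigned.neg {n : ℕ} {w : ℤ → ℤ} (hw : IsSigned n w) : IsSigned n (-w) := by
  refine ⟨fun j => by simp [hw.1 j], ?_⟩
  have hneg : Set.BijOn (fun x : ℤ => -x) (Set.Icc (-(n : ℤ)) n) (Set.Icc (-(n : ℤ)) n) := by
    refine Set.InvOn.bijOn ⟨fun x _ => neg_neg x, fun x _ => neg_neg x⟩ ?_ ?_ <;>
    · intro x hx
      simp only [Set.mem_Icc] at hx ⊢
      omega
  exact hneg.comp hw.2

/-- The identity is the unique element with `L = 0`, and the longest element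
`w₀ = -Id` is the unique element attaining the maximum `L`-value `n(n+1)/2`. -/
theorem L_eq_zero_iff_id (n : ℕ) (w : ℤ → ℤ) (hw : IsSigned n w) :
    (Lstat n w = 0 ↔ ∀ j ∈ Set.Icc (-(n : ℤ)) n, w j = j) ∧
    Lstat n w ≤ n * (n + 1) / 2 ∧
    (Lstat n w = n * (n + 1) / 2 ↔ ∀ j ∈ Set.Icc (-(n : ℤ)) n, w j = -j) := by
  refine ⟨(Lstat_eq_zero_iff hw.1).trans hw.Lset_eq_empty_iff, Lstat_le n w, ?_⟩
  have hfull : Lset n w = oppParityPairs n ↔ Lset n (-w) = ∅ := by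
    rw [Lset_neg hw.2.injOn, sdiff_eq_empty_iff_subset]
    exact ⟨fun h => h.superset, (Lset_subset_oppParityPairs n w).antisymm⟩
  rw [Lstat_eq_iff_Lset_eq, hfull, hw.neg.Lset_eq_empty_iff]
  simp only [Pi.neg_apply, neg_eq_iff_eq_neg]
end

section
/- For all n ∈ ℕ and all I ⊆ {0,1,…,n−1}, the signed generating function Σ_{w ∈ B_n, D(w) ⊆ I} (−1)^{l(w)} X^{L(w)} equals Σ_{w ∈ C_{n,0}, D(w) ⊆ I} (−1)^{l(w)} X^{L(w)}, where C_{n,0} is the set of even chessboard elements, i.e. signed permutations w with |w(j)| ≡ j mod 2 for all j ∈ [n]. -/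
open Finset Polynomial

/-!
Call a value `a ≥ 1` of `|w|` misplaced if `|w|⁻¹(a) ≢ a (mod 2)`; the even chessboard
elements are those without misplaced values. Otherwise let `a = m + 1` be the least misplaced
value. The values `m` and `m + 1` then sit at positions of one parity (for `m = 0` these are `0`
and `±|w|⁻¹(1)`; for `m > 0` use the minimality of `a`), so `w ↦ s_m w`, which only exchanges
the values `±m` and `±(m + 1)`, changes no comparison between entries at positions of different
parity. Hence it preserves `D(w)` (adjacent positions) and `L(w)`, while
`(-1)^l(w) = sgn |w| · (-1)^neg(w)` changes sign. Since `s_m w` has the same misplaced values,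
this is a sign-reversing involution on the non-chessboard elements of a descent class.
-/

section Relabel

variable {n : ℕ} {t u : ℤ → ℤ}

lemma Dset_comp_eq
    (h : ∀ i ∈ Icc (-(n : ℤ)) n, ∀ j ∈ Icc (-(n : ℤ)) n, i % 2 ≠ j % 2 →
      (t (u i) < t (u j) ↔ u i < u j)) :
    Dset n (t ∘ u) = Dset n u := by
  refine filter_congr fun i hi => ?_
  rw [mem_Ico] at hi
  exact h _ (by rw [mem_Icc]; omega) _ (by rw [mem_Icc]; omega) (by omega)

lemma Lset_comp_eq
    (h : ∀ i ∈ Icc (-(n : ℤ)) n, ∀ j ∈ Icc (-(n : ℤ)) n, i % 2 ≠ j % 2 →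
      (t (u i) < t (u j) ↔ u i < u j)) :
    Lset n (t ∘ u) = Lset n u := by
  refine filter_congr fun p hp => ?_
  rw [mem_product] at hp
  exact and_congr_right fun _ => and_congr_left fun hpar => h _ hp.2 _ hp.1 (Ne.symm hpar)

end Relabel

/-- The Coxeter generator `s_k` of `B_n` acting on values: `s_k w = simpleRefl k ∘ w`. -/
def simpleRefl (k : ℕ) (x : ℤ) : ℤ :=
  if k = 0 then (if x = 1 then -1 else if x = -1 then 1 else x)
  else if x = k then k + 1 else if x = k + 1 then k
  else if x = -k then -(k + 1) else if x = -(k + 1) then -k else x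

lemma simpleRefl_neg (k : ℕ) (x : ℤ) : simpleRefl k (-x) = -simpleRefl k x := by
  unfold simpleRefl
  split_ifs <;> omega

lemma simpleRefl_lt_simpleRefl_iff {k : ℕ} {x y : ℤ}
    (h : x.natAbs ∉ Set.Icc k (k + 1) ∨ y.natAbs ∉ Set.Icc k (k + 1)) :
    simpleRefl k x < simpleRefl k y ↔ x < y := by
  simp only [Set.mem_Icc] at h
  unfold simpleRefl
  split_ifs <;> omega

lemma ite_lt_mul_ite_add_neg {x y : ℤ} (h : x.natAbs ≠ y.natAbs) :
    ((if y < x then -1 else 1) * (if x + y < 0 then -1 else 1) : ℤˣ) =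
      if x.natAbs < y.natAbs then 1 else -1 := by
  split_ifs <;> first | omega | simp

lemma neg_one_pow_card_filter {α : Type*} (s : Finset α) (p : α → Prop) [DecidablePred p] :
    (-1 : ℤˣ) ^ #(s.filter p) = ∏ x ∈ s, if p x then -1 else 1 := by
  rw [prod_ite, prod_const, prod_const_one, mul_one]

lemma simpleRefl_signed (k : ℕ) (b : Bool) (x : ℤ) :
    simpleRefl k ((if b then -1 else 1) * x) = (if b then -1 else 1) * simpleRefl k x := by
  cases b <;> simp [simpleRefl_neg]

section FinShift

variable {n : ℕ}

lemma exists_fin_of_natAbs {j : ℤ} (hj : 1 ≤ j.natAbs ∧ j.natAbs ≤ n) :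
    ∃ i : Fin n, j = i + 1 ∨ j = -(i + 1) :=
  ⟨⟨j.natAbs - 1, by omega⟩, by simp only; omega⟩

lemma image_succ_univ :
    (univ : Finset (Fin n)).image (fun i : Fin n => ((i : ℕ) : ℤ) + 1) = Icc 1 (n : ℤ) := by
  ext j
  simp only [mem_image, mem_univ, true_and, mem_Icc]
  constructor
  · rintro ⟨i, rfl⟩
    omega
  · intro hj
    exact ⟨⟨(j - 1).toNat, by omega⟩, by simp only; omega⟩

lemma prod_Icc_one {M : Type*} [CommMonoid M] (f : ℤ → M) :
    ∏ j ∈ Icc (1 : ℤ) n, f j = ∏ i : Fin n, f (i + 1) := by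
  rw [← image_succ_univ, prod_image fun i _ i' _ h => by simpa [Fin.val_inj] using h]

end FinShift

namespace HypOct

variable {n : ℕ}

lemma fn_succ (w : HypOct n) (i : Fin n) :
    w.fn (i + 1) = (if w.2 i then -1 else 1) * ((w.1 i : ℤ) + 1) := by
  rw [HypOct.fn, dif_pos (by omega)]
  simp

lemma fn_neg_succ (w : HypOct n) (i : Fin n) : w.fn (-(i + 1)) = -w.fn (i + 1) := by
  rw [fn_succ, HypOct.fn, dif_neg (by omega), dif_pos (by omega)]
  simp

lemma fn_eq_zero (w : HypOct n) {j : ℤ} (hj : ¬(1 ≤ j.natAbs ∧ j.natAbs ≤ n)) :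
    w.fn j = 0 := by
  rw [HypOct.fn, dif_neg (by omega), dif_neg (by omega)]

lemma natAbs_fn_succ (w : HypOct n) (i : Fin n) : (w.fn (i + 1)).natAbs = w.1 i + 1 := by
  rw [fn_succ]
  split_ifs <;> omega

lemma fn_succ_neg_iff (w : HypOct n) (i : Fin n) : w.fn (i + 1) < 0 ↔ w.2 i := by
  rw [fn_succ]
  split_ifs <;> simp_all <;> omega

lemma fn_eq_comp_of_succ {w w' : HypOct n} {t : ℤ → ℤ} (ht : ∀ x, t (-x) = -t x)
    (h : ∀ i : Fin n, w'.fn (i + 1) = t (w.fn (i + 1))) : w'.fn = t ∘ w.fn := by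
  funext j
  by_cases hj : 1 ≤ j.natAbs ∧ j.natAbs ≤ n
  · obtain ⟨i, rfl | rfl⟩ := exists_fin_of_natAbs hj
    · exact h i
    · rw [Function.comp_apply, fn_neg_succ, fn_neg_succ, ht, h]
  · rw [Function.comp_apply, fn_eq_zero w hj, fn_eq_zero w' hj]
    have := ht 0
    rw [neg_zero] at this
    omega

def sign (w : HypOct n) : ℤˣ := Equiv.Perm.sign w.1 * ∏ i, if w.2 i then -1 else 1

theorem neg_one_pow_lenStat (w : HypOct n) : (-1 : ℤˣ) ^ lenStat n w.fn = w.sign := by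
  have hneg : (-1 : ℤˣ) ^ negStat n w.fn = ∏ i, if w.2 i then -1 else 1 := by
    rw [negStat, neg_one_pow_card_filter, prod_Icc_one]
    simp only [fn_succ_neg_iff]
  have hpairs : (-1 : ℤˣ) ^ (invStat n w.fn + nspStat n w.fn) = Equiv.Perm.sign w.1 := by
    rw [pow_add, invStat, nspStat, neg_one_pow_card_filter, neg_one_pow_card_filter,
      ← prod_mul_distrib, prod_product, prod_Icc_one, Equiv.Perm.sign_eq_prod_prod_Ioi]
    refine prod_congr rfl fun i _ => ?_
    rw [prod_Icc_one, ← filter_lt_eq_Ioi, prod_filter]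
    refine prod_congr rfl fun j _ => ?_
    by_cases hij : i < j
    · have hij' : (i : ℤ) + 1 < j + 1 := by simpa using hij
      have habs := ite_lt_mul_ite_add_neg (x := w.fn (i + 1)) (y := w.fn (j + 1))
        (by rw [natAbs_fn_succ, natAbs_fn_succ]
            simpa [Fin.val_inj] using w.1.injective.ne hij.ne)
      simp only [natAbs_fn_succ, add_lt_add_iff_right, Fin.val_fin_lt] at habs
      simp only [hij, hij', true_and, if_true, habs]
    · have hij' : ¬ (i : ℤ) + 1 < j + 1 := by simpa using hij
      simp [hij, hij']
  rw [lenStat, add_right_comm, pow_add, hpairs, hneg, sign]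

-- A `Fin n`-value `x` of `w.1` encodes the value `x + 1` of `|w|`: so `s_0` flips the sign of the
-- entry `±1`, and `s_k` (`k > 0`) exchanges the values encoded by `k - 1` and `k`.
def simpleReflMul (k : Fin n) (w : HypOct n) : HypOct n :=
  if (k : ℕ) = 0 then (w.1, Function.update w.2 (w.1⁻¹ k) (!w.2 (w.1⁻¹ k)))
  else (Equiv.swap ⟨k - 1, (Nat.sub_le k 1).trans_lt k.isLt⟩ k * w.1, w.2)

theorem fn_simpleReflMul (k : Fin n) (w : HypOct n) :
    (simpleReflMul k w).fn = simpleRefl k ∘ w.fn := by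
  refine fn_eq_comp_of_succ (simpleRefl_neg k) fun i => ?_
  rw [fn_succ, fn_succ, simpleRefl_signed]
  by_cases hk : (k : ℕ) = 0
  · simp only [simpleReflMul, if_pos hk]
    by_cases hi : i = w.1⁻¹ k
    · subst hi
      simp only [Function.update_self, Equiv.Perm.coe_inv, Equiv.apply_symm_apply, hk]
      cases w.2 (w.1⁻¹ k) <;> simp [simpleRefl]
    · have hσi : (w.1 i : ℕ) ≠ 0 := fun h => hi (by
        rw [Equiv.Perm.eq_inv_iff_eq]; exact Fin.ext (h.trans hk.symm))
      rw [Function.update_of_ne hi]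
      congr 1
      unfold simpleRefl
      split_ifs <;> omega
  · simp only [simpleReflMul, if_neg hk, Equiv.Perm.mul_apply]
    congr 1
    set a : Fin n := ⟨k - 1, (Nat.sub_le k 1).trans_lt k.isLt⟩
    have ha : (a : ℕ) = k - 1 := rfl
    rcases eq_or_ne (w.1 i) a with h | h
    · rw [h, Equiv.swap_apply_left]
      unfold simpleRefl
      split_ifs <;> omega
    rcases eq_or_ne (w.1 i) k with h' | h'
    · rw [h', Equiv.swap_apply_right]
      unfold simpleRefl
      split_ifs <;> omega
    · rw [Equiv.swap_apply_of_ne_of_ne h h']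
      have := Fin.val_injective.ne h
      have := Fin.val_injective.ne h'
      unfold simpleRefl
      split_ifs <;> omega

theorem sign_simpleReflMul (k : Fin n) (w : HypOct n) : (simpleReflMul k w).sign = -w.sign := by
  by_cases hk : (k : ℕ) = 0
  · simp only [simpleReflMul, if_pos hk, sign]
    rw [Fintype.prod_eq_mul_prod_compl (w.1⁻¹ k), Fintype.prod_eq_mul_prod_compl (w.1⁻¹ k),
      Function.update_self]
    rw [prod_congr rfl fun i hi => by rw [Function.update_of_ne (by simpa using hi)]]
    cases w.2 (w.1⁻¹ k) <;> simp
  · simp only [simpleReflMul, if_neg hk, sign, Equiv.Perm.sign_mul]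
    rw [Equiv.Perm.sign_swap (Fin.ne_of_val_ne (show (k : ℕ) - 1 ≠ k by omega))]
    simp

theorem simpleReflMul_simpleReflMul (k : Fin n) (w : HypOct n) :
    simpleReflMul k (simpleReflMul k w) = w := by
  by_cases hk : (k : ℕ) = 0
  · simp [simpleReflMul, hk]
  · simp [simpleReflMul, hk, ← mul_assoc]

lemma simpleReflMul_ne (k : Fin n) (w : HypOct n) : simpleReflMul k w ≠ w := fun h =>
  units_ne_neg_self w.sign (by rw [← sign_simpleReflMul k, h])

def misplacedValues (σ : Equiv.Perm (Fin n)) : Finset (Fin n) :=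
  univ.filter fun x => (σ⁻¹ x : ℕ) % 2 ≠ (x : ℕ) % 2

lemma apply_mem_misplacedValues_iff (σ : Equiv.Perm (Fin n)) (i : Fin n) :
    σ i ∈ misplacedValues σ ↔ (i : ℕ) % 2 ≠ (σ i : ℕ) % 2 := by
  simp [misplacedValues]

lemma chessboard_iff (w : HypOct n) :
    (∀ j ∈ Icc (1 : ℤ) n, |w.fn j| % 2 = j % 2) ↔ misplacedValues w.1 = ∅ := by
  rw [← image_succ_univ, forall_mem_image, eq_empty_iff_forall_notMem]
  simp only [mem_univ, true_imp_iff, Int.abs_eq_natAbs, natAbs_fn_succ]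
  refine ⟨fun h x => ?_, fun h i => ?_⟩
  · obtain ⟨i, rfl⟩ := w.1.surjective x
    have := @h i
    rw [apply_mem_misplacedValues_iff, not_not]
    omega
  · have := h (w.1 i)
    rw [apply_mem_misplacedValues_iff, not_not] at this
    omega

lemma emod_two_eq_of_natAbs_fn_mem (w : HypOct n) (h : (misplacedValues w.1).Nonempty)
    {j : ℤ} (hj : j ∈ Icc (-(n : ℤ)) n)
    (hval : (w.fn j).natAbs ∈
      Set.Icc ((misplacedValues w.1).min' h : ℕ) ((misplacedValues w.1).min' h + 1)) :
    j % 2 = ((misplacedValues w.1).min' h : ℕ) % 2 := by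
  set m := (misplacedValues w.1).min' h
  rw [mem_Icc] at hj
  rw [Set.mem_Icc] at hval
  by_cases hj0 : 1 ≤ j.natAbs ∧ j.natAbs ≤ n
  · obtain ⟨i, hi⟩ := exists_fin_of_natAbs hj0
    have habs : (w.fn j).natAbs = w.1 i + 1 := by
      rcases hi with rfl | rfl
      · exact natAbs_fn_succ w i
      · rw [fn_neg_succ, Int.natAbs_neg, natAbs_fn_succ]
    have hpar : (i : ℕ) % 2 ≠ (m : ℕ) % 2 := by
      rcases Nat.lt_or_ge (w.1 i) m with hlt | hge
      · have hplaced : w.1 i ∉ misplacedValues w.1 := fun hmem =>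
          (min'_le _ _ hmem).not_gt hlt
        rw [apply_mem_misplacedValues_iff, not_not] at hplaced
        omega
      · have hσi : w.1 i = m := Fin.ext (by omega)
        have hm := (apply_mem_misplacedValues_iff w.1 i).mp (hσi ▸ min'_mem _ h)
        rwa [hσi] at hm
    omega
  · rw [fn_eq_zero w hj0] at hval
    omega

lemma misplacedValues_simpleReflMul_min' (w : HypOct n) (h : (misplacedValues w.1).Nonempty) :
    misplacedValues (simpleReflMul ((misplacedValues w.1).min' h) w).1 =
      misplacedValues w.1 := by
  set m := (misplacedValues w.1).min' h
  by_cases hm0 : (m : ℕ) = 0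
  · simp [simpleReflMul, hm0]
  ext x
  simp only [simpleReflMul, if_neg hm0, misplacedValues, mem_filter, mem_univ, true_and,
    mul_inv_rev, Equiv.swap_inv, Equiv.Perm.mul_apply]
  set a : Fin n := ⟨m - 1, (Nat.sub_le m 1).trans_lt m.isLt⟩
  have hm : (w.1⁻¹ m : ℕ) % 2 ≠ (m : ℕ) % 2 := (mem_filter.mp (min'_mem _ h)).2
  have ha : (w.1⁻¹ a : ℕ) % 2 = (a : ℕ) % 2 := by
    by_contra ha
    have := min'_le _ a (show a ∈ misplacedValues w.1 from mem_filter.mpr ⟨mem_univ a, ha⟩)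
    rw [Fin.le_def] at this
    exact hm0 (by simp only [a] at this; omega)
  have ham : (a : ℕ) = m - 1 := rfl
  rcases eq_or_ne x a with rfl | hxa
  · rw [Equiv.swap_apply_left]
    omega
  rcases eq_or_ne x m with rfl | hxm
  · rw [Equiv.swap_apply_right]
    omega
  · rw [Equiv.swap_apply_of_ne_of_ne hxa hxm]

lemma simpleRefl_min'_lt_iff (w : HypOct n) (h : (misplacedValues w.1).Nonempty) :
    ∀ i ∈ Icc (-(n : ℤ)) n, ∀ j ∈ Icc (-(n : ℤ)) n, i % 2 ≠ j % 2 →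
      (simpleRefl ((misplacedValues w.1).min' h) (w.fn i) <
          simpleRefl ((misplacedValues w.1).min' h) (w.fn j) ↔ w.fn i < w.fn j) :=
  fun _ hi _ hj hij => simpleRefl_lt_simpleRefl_iff <| not_and_or.mp fun ⟨hvi, hvj⟩ =>
    hij ((emod_two_eq_of_natAbs_fn_mem w h hi hvi).trans
      (emod_two_eq_of_natAbs_fn_mem w h hj hvj).symm)

noncomputable def chessboardInvolution (w : HypOct n) : HypOct n :=
  if h : (misplacedValues w.1).Nonempty then simpleReflMul ((misplacedValues w.1).min' h) w
  else w

lemma chessboardInvolution_of_nonempty {w : HypOct n} (h : (misplacedValues w.1).Nonempty) :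
    chessboardInvolution w = simpleReflMul ((misplacedValues w.1).min' h) w :=
  dif_pos h

lemma misplacedValues_chessboardInvolution (w : HypOct n) :
    misplacedValues (chessboardInvolution w).1 = misplacedValues w.1 := by
  unfold chessboardInvolution
  split_ifs with h
  · exact misplacedValues_simpleReflMul_min' w h
  · rfl

lemma chessboardInvolution_involutive :
    Function.Involutive (chessboardInvolution : HypOct n → HypOct n) := by
  intro w
  by_cases h : (misplacedValues w.1).Nonempty
  · have h' : (misplacedValues (chessboardInvolution w).1).Nonempty := by
      rwa [misplacedValues_chessboardInvolution]
    have hmin : (misplacedValues (chessboardInvolution w).1).min' h' =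
        (misplacedValues w.1).min' h := by
      congr 1
      exact misplacedValues_chessboardInvolution w
    rw [chessboardInvolution_of_nonempty h', hmin, chessboardInvolution_of_nonempty h,
      simpleReflMul_simpleReflMul]
  · simp only [chessboardInvolution, dif_neg h]

lemma sign_chessboardInvolution {w : HypOct n} (h : (misplacedValues w.1).Nonempty) :
    (chessboardInvolution w).sign = -w.sign := by
  rw [chessboardInvolution_of_nonempty h, sign_simpleReflMul]

lemma chessboardInvolution_ne {w : HypOct n} (h : (misplacedValues w.1).Nonempty) :
    chessboardInvolution w ≠ w := by
  rw [chessboardInvolution_of_nonempty h]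
  exact simpleReflMul_ne _ w

lemma Dset_chessboardInvolution (w : HypOct n) :
    Dset n (chessboardInvolution w).fn = Dset n w.fn := by
  unfold chessboardInvolution
  split_ifs with h
  · rw [fn_simpleReflMul]
    exact Dset_comp_eq (simpleRefl_min'_lt_iff w h)
  · rfl

lemma Lset_chessboardInvolution (w : HypOct n) :
    Lset n (chessboardInvolution w).fn = Lset n w.fn := by
  unfold chessboardInvolution
  split_ifs with h
  · rw [fn_simpleReflMul]
    exact Lset_comp_eq (simpleRefl_min'_lt_iff w h)
  · rfl

end HypOct

lemma neg_one_pow_mul_add_neg_one_pow_mul {a b : ℕ} (h : (-1 : ℤˣ) ^ b = -(-1) ^ a)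
    (p : ℤ[X]) : (-1) ^ a * p + (-1) ^ b * p = 0 := by
  have h' := congrArg (fun u : ℤˣ => ((u : ℤ) : ℤ[X])) h
  push_cast at h'
  rw [h']
  ring

theorem supported_on_chessboard_general (n : ℕ) (I : Finset ℤ) :
    ∑ w ∈ Finset.univ.filter (fun w : HypOct n => Dset n (HypOct.fn w) ⊆ I),
        ((-1 : Polynomial ℤ) ^ lenStat n (HypOct.fn w) * X ^ Lstat n (HypOct.fn w))
      =
    ∑ w ∈ Finset.univ.filter (fun w : HypOct n => Dset n (HypOct.fn w) ⊆ I ∧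
          ∀ j ∈ Finset.Icc (1 : ℤ) n, |HypOct.fn w j| % 2 = j % 2),
        ((-1 : Polynomial ℤ) ^ lenStat n (HypOct.fn w) * X ^ Lstat n (HypOct.fn w)) := by
  rw [← sum_filter_add_sum_filter_not _ (fun w : HypOct n => ∀ j ∈ Icc (1 : ℤ) n,
    |HypOct.fn w j| % 2 = j % 2), filter_filter, add_eq_left]
  have hmis : ∀ w ∈ ((univ.filter fun w : HypOct n => Dset n w.fn ⊆ I).filter fun w =>
      ¬ ∀ j ∈ Icc (1 : ℤ) n, |w.fn j| % 2 = j % 2), (HypOct.misplacedValues w.1).Nonempty :=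
    fun w hw =>
      nonempty_iff_ne_empty.mpr ((HypOct.chessboard_iff w).not.mp (mem_filter.mp hw).2)
  refine sum_involution (fun w _ => HypOct.chessboardInvolution w) (fun w hw => ?_)
    (fun w hw _ => HypOct.chessboardInvolution_ne (hmis w hw)) (fun w hw => ?_)
    (fun w _ => HypOct.chessboardInvolution_involutive w)
  · rw [Lstat, Lstat, HypOct.Lset_chessboardInvolution]
    refine neg_one_pow_mul_add_neg_one_pow_mul ?_ _
    rw [HypOct.neg_one_pow_lenStat, HypOct.neg_one_pow_lenStat,
      HypOct.sign_chessboardInvolution (hmis w hw)]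
  · simp only [mem_filter, mem_univ, true_and, HypOct.chessboard_iff] at hw ⊢
    rwa [HypOct.Dset_chessboardInvolution, HypOct.misplacedValues_chessboardInvolution]

/-- The signed generating function of `L` over a descent class of `Bₙ` is
supported on the even chessboard elements. -/
theorem supported_on_chessboard (n : ℕ) (I : Finset ℤ) (hI : I ⊆ Finset.Ico 0 (n : ℤ)) :
    ∑ w ∈ Finset.univ.filter (fun w : HypOct n => Dset n (HypOct.fn w) ⊆ I),
        ((-1 : Polynomial ℤ) ^ lenStat n (HypOct.fn w) * X ^ Lstat n (HypOct.fn w))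
      =
    ∑ w ∈ Finset.univ.filter (fun w : HypOct n => Dset n (HypOct.fn w) ⊆ I ∧
          ∀ j ∈ Finset.Icc (1 : ℤ) n, |HypOct.fn w j| % 2 = j % 2),
        ((-1 : Polynomial ℤ) ^ lenStat n (HypOct.fn w) * X ^ Lstat n (HypOct.fn w)) :=
  supported_on_chessboard_general n I
end

section
/- If w ∈ B_n is not an even chessboard element (i.e. there is j with |w(j)| ≢ j mod 2), let i ∈ {0,…,n−1} be minimal with |w⁻¹(i)| ≡ |w⁻¹(i+1)| mod 2 and set w* = s_i w. Then L(w*) = L(w), D(w*) = D(w), l(w*) = l(w) ± 1, (w*)* = w, and w* ≠ w. -/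
open Finset Polynomial

/-- The Coxeter generator `sᵢ` of `Bₙ`, acting on values: for `i ≥ 1` it swaps
`i ↔ i+1` and `-i ↔ -(i+1)`; `s₀` swaps `1 ↔ -1`. -/
def sgen (i : ℤ) : ℤ → ℤ := fun x =>
  if i = 0 then (if x = 1 then -1 else if x = -1 then 1 else x)
  else if x = i then i + 1 else if x = i + 1 then i
  else if x = -i then -(i + 1) else if x = -(i + 1) then -i else x

/-!
Left multiplication by `sᵢ` exchanges the values `±i` and `±(i+1)` (for `i = 0`, the values `±1`).
A pair of positions changes its relative order only if its two values are among those exchanged,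
hence only if it is `(j, j')`, `(-j', -j)` or (for `i = 0`) `(-j', j')`; these have equal parity,
so the pairs of opposite parity counted by `L` and the adjacent pairs counted by `D` are untouched.
On the positive positions the values `±i` and `±(i+1)` sit at `|j|` and `|j'|`, and exactly one
of the three summands of the length (inversions, negative values, negative sums) changes, by one.
-/

lemma abs_emod_two (a : ℤ) : |a| % 2 = a % 2 := by
  rcases abs_choice a with h | h <;> rw [h]
  omega

lemma card_filter_eq_add_one_or_of_iff_off {α : Type*} [DecidableEq α] {s : Finset α}
    {p q : α → Prop} [DecidablePred p] [DecidablePred q] {m : α} (hm : m ∈ s)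
    (hpq : ∀ c ∈ s, c ≠ m → (p c ↔ q c)) (hpqm : ¬(p m ↔ q m)) :
    #(s.filter p) = #(s.filter q) + 1 ∨ #(s.filter q) = #(s.filter p) + 1 := by
  have hrest : (s.erase m).filter p = (s.erase m).filter q :=
    filter_congr fun c hc => hpq c (mem_of_mem_erase hc) (ne_of_mem_erase hc)
  have hnotMem : m ∉ (s.erase m).filter q := fun h => notMem_erase m s (mem_filter.1 h).1
  rw [← insert_erase hm, filter_insert, filter_insert, hrest]
  by_cases hp : p m <;> by_cases hq : q m <;> simp_all [card_insert_of_notMem]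

section sgen

variable {i : ℤ}

lemma sgen_sgen (hi : 0 ≤ i) (x : ℤ) : sgen i (sgen i x) = x := by
  unfold sgen; grind

lemma sgen_injective (hi : 0 ≤ i) : Function.Injective (sgen i) :=
  Function.LeftInverse.injective (sgen_sgen hi)

lemma sgen_succ_ne (i : ℤ) : sgen i (i + 1) ≠ i + 1 := by
  unfold sgen; grind

lemma sgen_lt_sgen_iff (hi : 0 ≤ i) {x y : ℤ} (hxy : x < y) :
    sgen i y < sgen i x ↔
      (x = i ∧ y = i + 1) ∨ (x = -(i + 1) ∧ y = -i) ∨ (i = 0 ∧ x = -1 ∧ y = 1) := by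
  unfold sgen; grind

end sgen

namespace IsSigned

variable {n : ℕ} {w : ℤ → ℤ}

lemma apply_zero (hw : IsSigned n w) : w 0 = 0 := by
  have h := hw.1 0
  rw [neg_zero] at h
  omega

lemma eq_of_apply_eq (hw : IsSigned n w) {x y : ℤ} (hx : x ∈ Icc (-(n : ℤ)) n)
    (hy : y ∈ Icc (-(n : ℤ)) n) (h : w x = w y) : x = y :=
  hw.2.injOn (by simpa using hx) (by simpa using hy) h

lemma abs_apply_abs (hw : IsSigned n w) (x : ℤ) : |w (|x|)| = |w x| := by
  rcases abs_choice x with h | h <;> rw [h]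
  rw [hw.1, abs_neg]

lemma eq_of_abs_apply_eq (hw : IsSigned n w) {c d : ℤ} (hc : c ∈ Icc (1 : ℤ) n)
    (hd : d ∈ Icc (1 : ℤ) n) (h : |w c| = |w d|) : c = d := by
  rw [mem_Icc] at hc hd
  rcases abs_eq_abs.1 h with h | h
  · exact hw.eq_of_apply_eq (by simp; omega) (by simp; omega) h
  · have := hw.eq_of_apply_eq (x := c) (y := -d) (by simp; omega) (by simp; omega)
      (by rw [hw.1, h])
    omega

lemma apply_ne_zero (hw : IsSigned n w) {c : ℤ} (hc : c ∈ Icc (1 : ℤ) n) : w c ≠ 0 := by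
  intro h
  have := hw.eq_of_apply_eq (x := c) (y := 0) (by simp at hc ⊢; omega) (by simp)
    (h.trans hw.apply_zero.symm)
  simp at hc
  omega

lemma sgen_lt_sgen_iff_of_emod_two_ne (hw : IsSigned n w) {i j j' : ℤ} (hi : 0 ≤ i)
    (hj : j ∈ Icc (-(n : ℤ)) n) (hj' : j' ∈ Icc (-(n : ℤ)) n) (hwj : w j = i)
    (hwj' : w j' = i + 1) (hpar : j % 2 = j' % 2) {x y : ℤ} (hx : x ∈ Icc (-(n : ℤ)) n)
    (hy : y ∈ Icc (-(n : ℤ)) n) (hxy : x % 2 ≠ y % 2) :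
    sgen i (w y) < sgen i (w x) ↔ w y < w x := by
  have hneg : ∀ {k}, k ∈ Icc (-(n : ℤ)) n → -k ∈ Icc (-(n : ℤ)) n := by
    intro k hk; rw [mem_Icc] at hk ⊢; omega
  have no_flip : ∀ a ∈ Icc (-(n : ℤ)) n, ∀ b ∈ Icc (-(n : ℤ)) n, a % 2 ≠ b % 2 →
      w a < w b → sgen i (w a) < sgen i (w b) := by
    intro a ha b hb hab hlt
    refine lt_of_not_ge fun hle => hab ?_
    have hflip : sgen i (w b) < sgen i (w a) :=
      hle.lt_of_ne ((sgen_injective hi).ne hlt.ne')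
    rcases (sgen_lt_sgen_iff hi hlt).1 hflip with ⟨h1, h2⟩ | ⟨h1, h2⟩ | ⟨hi0, h1, h2⟩
    · obtain rfl := hw.eq_of_apply_eq ha hj (h1.trans hwj.symm)
      obtain rfl := hw.eq_of_apply_eq hb hj' (h2.trans hwj'.symm)
      exact hpar
    · obtain rfl := hw.eq_of_apply_eq ha (hneg hj') (by rw [h1, hw.1, hwj'])
      obtain rfl := hw.eq_of_apply_eq hb (hneg hj) (by rw [h2, hw.1, hwj])
      omega
    · obtain rfl := hw.eq_of_apply_eq ha (hneg hj') (by rw [h1, hw.1, hwj']; omega)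
      obtain rfl := hw.eq_of_apply_eq hb hj' (by rw [h2, hwj']; omega)
      omega
  constructor
  · intro h
    refine lt_of_not_ge fun hle => (no_flip x hx y hy hxy ?_).asymm h
    exact hle.lt_of_ne fun heq => hxy (by rw [hw.eq_of_apply_eq hx hy heq])
  · exact no_flip y hy x hx hxy.symm

end IsSigned

section sgenStats

variable {n : ℕ} {w : ℤ → ℤ} {i j j' : ℤ}

lemma IsSigned.Lset_sgen (hw : IsSigned n w) (hi : 0 ≤ i) (hj : j ∈ Icc (-(n : ℤ)) n)
    (hj' : j' ∈ Icc (-(n : ℤ)) n) (hwj : w j = i) (hwj' : w j' = i + 1)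
    (hpar : j % 2 = j' % 2) : Lset n (fun x => sgen i (w x)) = Lset n w := by
  refine filter_congr fun p hp => ?_
  rw [mem_product] at hp
  exact and_congr_right fun _ => and_congr_left fun hp2 =>
    hw.sgen_lt_sgen_iff_of_emod_two_ne hi hj hj' hwj hwj' hpar hp.1 hp.2 hp2

lemma IsSigned.Dset_sgen (hw : IsSigned n w) (hi : 0 ≤ i) (hj : j ∈ Icc (-(n : ℤ)) n)
    (hj' : j' ∈ Icc (-(n : ℤ)) n) (hwj : w j = i) (hwj' : w j' = i + 1)
    (hpar : j % 2 = j' % 2) : Dset n (fun x => sgen i (w x)) = Dset n w := by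
  refine filter_congr fun k hk => ?_
  rw [mem_Ico] at hk
  exact hw.sgen_lt_sgen_iff_of_emod_two_ne hi hj hj' hwj hwj' hpar
    (by rw [mem_Icc]; omega) (by rw [mem_Icc]; omega) (by omega)

lemma lenStat_sgen_zero {m : ℤ} (hm : m ∈ Icc (1 : ℤ) n) (hwm : |w m| = 1)
    (hum : ∀ c ∈ Icc (1 : ℤ) n, |w c| = 1 → c = m) (hne : ∀ c ∈ Icc (1 : ℤ) n, w c ≠ 0) :
    lenStat n (fun x => sgen 0 (w x)) = lenStat n w + 1 ∨
      lenStat n w = lenStat n (fun x => sgen 0 (w x)) + 1 := by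
  have hval : ∀ c ∈ Icc (1 : ℤ) n, (c = m ∧ sgen 0 (w c) = -w c ∧ (w c = 1 ∨ w c = -1)) ∨
      (c ≠ m ∧ sgen 0 (w c) = w c ∧ (1 < w c ∨ w c < -1)) := by
    intro c hc
    have h1 : |w c| = 1 ↔ c = m := ⟨hum c hc, by rintro rfl; exact hwm⟩
    have h0 := hne c hc
    rw [abs_eq zero_le_one] at h1
    simp only [sgen]
    split_ifs <;> omega
  have hinv : invStat n (fun x => sgen 0 (w x)) = invStat n w := by
    refine congrArg card (filter_congr fun p hp => ?_)
    rw [mem_product] at hp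
    have := hval _ hp.1; have := hval _ hp.2
    dsimp only
    omega
  have hnsp : nspStat n (fun x => sgen 0 (w x)) = nspStat n w := by
    refine congrArg card (filter_congr fun p hp => ?_)
    rw [mem_product] at hp
    have := hval _ hp.1; have := hval _ hp.2
    dsimp only
    omega
  have hneg : negStat n (fun x => sgen 0 (w x)) = negStat n w + 1 ∨
      negStat n w = negStat n (fun x => sgen 0 (w x)) + 1 :=
    card_filter_eq_add_one_or_of_iff_off hm
      (fun c hc _ => by have := hval c hc; dsimp only; omega)
      (by have := hval m hm; dsimp only; omega)
  unfold lenStat; omega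

def SwapsAdjacentValues (n : ℕ) (i a b : ℤ) (w v : ℤ → ℤ) : Prop :=
  ∀ c ∈ Icc (1 : ℤ) n,
    (c = a ∧ (w c = i ∧ v c = i + 1 ∨ w c = -i ∧ v c = -(i + 1))) ∨
    (c = b ∧ (w c = i + 1 ∧ v c = i ∨ w c = -(i + 1) ∧ v c = -i)) ∨
    (c ≠ a ∧ c ≠ b ∧ v c = w c ∧ (i + 1 < w c ∨ -i < w c ∧ w c < i ∨ w c < -(i + 1)))

lemma swapsAdjacentValues_sgen {a b : ℤ} (hi : 0 < i) (hwa : |w a| = i) (hwb : |w b| = i + 1)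
    (hua : ∀ c ∈ Icc (1 : ℤ) n, |w c| = i → c = a)
    (hub : ∀ c ∈ Icc (1 : ℤ) n, |w c| = i + 1 → c = b) :
    SwapsAdjacentValues n i a b w (fun x => sgen i (w x)) := by
  intro c hc
  have h1 : |w c| = i ↔ c = a := ⟨hua c hc, by rintro rfl; exact hwa⟩
  have h2 : |w c| = i + 1 ↔ c = b := ⟨hub c hc, by rintro rfl; exact hwb⟩
  rw [abs_eq hi.le] at h1
  rw [abs_eq (by omega)] at h2
  simp only [sgen]
  split_ifs <;> omega

namespace SwapsAdjacentValues

variable {v : ℤ → ℤ} {a b : ℤ}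

lemma negStat_eq (h : SwapsAdjacentValues n i a b w v) (hi : 0 < i) :
    negStat n v = negStat n w :=
  congrArg card (filter_congr fun c hc => by have := h c hc; omega)

lemma lt_iff_lt_iff (h : SwapsAdjacentValues n i a b w v) (hi : 0 < i) (hab : a ≠ b)
    {p : ℤ × ℤ} (hp : p ∈ Icc (1 : ℤ) n ×ˢ Icc (1 : ℤ) n) :
    ((p.1 < p.2 ∧ v p.2 < v p.1) ↔ (p.1 < p.2 ∧ w p.2 < w p.1)) ↔
      ¬(p = (min a b, max a b) ∧ (w p.1 < 0 ↔ w p.2 < 0)) := by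
  obtain ⟨c, d⟩ := p
  rw [mem_product] at hp
  simp only [Prod.mk.injEq]
  rcases h c hp.1 with ⟨rfl, hc⟩ | ⟨rfl, hc⟩ | hc <;>
    rcases h d hp.2 with ⟨rfl, hd⟩ | ⟨rfl, hd⟩ | hd <;> omega

lemma add_neg_iff_add_neg_iff (h : SwapsAdjacentValues n i a b w v) (hi : 0 < i) (hab : a ≠ b)
    {p : ℤ × ℤ} (hp : p ∈ Icc (1 : ℤ) n ×ˢ Icc (1 : ℤ) n) :
    ((p.1 < p.2 ∧ v p.1 + v p.2 < 0) ↔ (p.1 < p.2 ∧ w p.1 + w p.2 < 0)) ↔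
      ¬(p = (min a b, max a b) ∧ ¬(w p.1 < 0 ↔ w p.2 < 0)) := by
  obtain ⟨c, d⟩ := p
  rw [mem_product] at hp
  simp only [Prod.mk.injEq]
  rcases h c hp.1 with ⟨rfl, hc⟩ | ⟨rfl, hc⟩ | hc <;>
    rcases h d hp.2 with ⟨rfl, hd⟩ | ⟨rfl, hd⟩ | hd <;> omega

lemma lenStat_eq_add_one_or (h : SwapsAdjacentValues n i a b w v) (hi : 0 < i) (hab : a ≠ b)
    (ha : a ∈ Icc (1 : ℤ) n) (hb : b ∈ Icc (1 : ℤ) n) :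
    lenStat n v = lenStat n w + 1 ∨ lenStat n w = lenStat n v + 1 := by
  have hm : (min a b, max a b) ∈ Icc (1 : ℤ) n ×ˢ Icc (1 : ℤ) n := by
    rw [mem_Icc] at ha hb
    simp only [mem_product, mem_Icc]
    omega
  have hneg := h.negStat_eq hi
  unfold lenStat
  -- The pair of positions {a, b} is an inversion flip when the signs agree and a
  -- negative-sum flip when they differ; no other pair changes.
  by_cases hs : w (min a b) < 0 ↔ w (max a b) < 0
  · have hinv : invStat n v = invStat n w + 1 ∨ invStat n w = invStat n v + 1 :=
      card_filter_eq_add_one_or_of_iff_off hm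
        (fun p hp hpm => (h.lt_iff_lt_iff hi hab hp).2 fun h' => hpm h'.1)
        fun h' => (h.lt_iff_lt_iff hi hab hm).1 h' ⟨rfl, hs⟩
    have hnsp : nspStat n v = nspStat n w := congrArg card <| filter_congr fun p hp =>
      (h.add_neg_iff_add_neg_iff hi hab hp).2 fun h' => by rw [h'.1] at h'; exact h'.2 hs
    omega
  · have hinv : invStat n v = invStat n w := congrArg card <| filter_congr fun p hp =>
      (h.lt_iff_lt_iff hi hab hp).2 fun h' => by rw [h'.1] at h'; exact hs h'.2
    have hnsp : nspStat n v = nspStat n w + 1 ∨ nspStat n w = nspStat n v + 1 :=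
      card_filter_eq_add_one_or_of_iff_off hm
        (fun p hp hpm => (h.add_neg_iff_add_neg_iff hi hab hp).2 fun h' => hpm h'.1)
        fun h' => (h.add_neg_iff_add_neg_iff hi hab hm).1 h' ⟨rfl, hs⟩
    omega

end SwapsAdjacentValues

lemma IsSigned.lenStat_sgen (hw : IsSigned n w) (hi : 0 ≤ i) (hj : j ∈ Icc (-(n : ℤ)) n)
    (hj' : j' ∈ Icc (-(n : ℤ)) n) (hwj : w j = i) (hwj' : w j' = i + 1) :
    lenStat n (fun x => sgen i (w x)) = lenStat n w + 1 ∨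
      lenStat n w = lenStat n (fun x => sgen i (w x)) + 1 := by
  have abs_mem : ∀ {k : ℤ}, k ∈ Icc (-(n : ℤ)) n → w k ≠ 0 → |k| ∈ Icc (1 : ℤ) n := by
    intro k hk hk0
    have : k ≠ 0 := by rintro rfl; exact hk0 hw.apply_zero
    rw [mem_Icc] at hk ⊢
    exact ⟨Int.one_le_abs this, abs_le.2 hk⟩
  have hb := abs_mem hj' (by omega)
  have hwb : |w (|j'|)| = i + 1 := by rw [hw.abs_apply_abs, hwj', abs_of_nonneg (by omega)]
  have hub : ∀ c ∈ Icc (1 : ℤ) n, |w c| = i + 1 → c = |j'| := fun c hc h =>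
    hw.eq_of_abs_apply_eq hc hb (h.trans hwb.symm)
  rcases hi.eq_or_lt with rfl | hi
  · rw [zero_add] at hwb hub
    exact lenStat_sgen_zero hb hwb hub fun c hc => hw.apply_ne_zero hc
  · have ha := abs_mem hj (by omega)
    have hwa : |w (|j|)| = i := by rw [hw.abs_apply_abs, hwj, abs_of_pos hi]
    have hab : |j| ≠ |j'| := fun h => by rw [h] at hwa; omega
    exact (swapsAdjacentValues_sgen hi hwa hwb
      (fun c hc h => hw.eq_of_abs_apply_eq hc ha (h.trans hwa.symm)) hub).lenStat_eq_add_one_or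
      hi hab ha hb

end sgenStats

theorem star_involution_general (n : ℕ) (w : ℤ → ℤ) (hw : IsSigned n w)
    (i : ℤ) (hi0 : 0 ≤ i)
    (j j' : ℤ) (hj : j ∈ Finset.Icc (-(n : ℤ)) n) (hj' : j' ∈ Finset.Icc (-(n : ℤ)) n)
    (hwj : w j = i) (hwj' : w j' = i + 1) (hpar : |j| % 2 = |j'| % 2) :
    Lstat n (fun x => sgen i (w x)) = Lstat n w ∧
    Dset n (fun x => sgen i (w x)) = Dset n w ∧
    (lenStat n (fun x => sgen i (w x)) = lenStat n w + 1 ∨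
      lenStat n w = lenStat n (fun x => sgen i (w x)) + 1) ∧
    (fun x => sgen i (sgen i (w x))) = w ∧
    (fun x => sgen i (w x)) ≠ w := by
  rw [abs_emod_two, abs_emod_two] at hpar
  refine ⟨?_, hw.Dset_sgen hi0 hj hj' hwj hwj' hpar, hw.lenStat_sgen hi0 hj hj' hwj hwj',
    funext fun x => sgen_sgen hi0 (w x), fun h => sgen_succ_ne i ?_⟩
  · rw [Lstat, Lstat, hw.Lset_sgen hi0 hj hj' hwj hwj' hpar]
  · simpa [hwj'] using congrFun h j'

/-- If `w` is not an even chessboard element and `i` is minimal with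
`|w⁻¹(i)| ≡ |w⁻¹(i+1)| mod 2`, then `w* = sᵢw` satisfies `L(w*) = L(w)`,
`D(w*) = D(w)`, `l(w*) = l(w) ± 1`, `(w*)* = w` and `w* ≠ w`. -/
theorem star_involution (n : ℕ) (w : ℤ → ℤ) (hw : IsSigned n w)
    (hnot : ∃ j ∈ Finset.Icc (1 : ℤ) n, |w j| % 2 ≠ j % 2)
    (i : ℤ) (hi0 : 0 ≤ i) (hin : i ≤ (n : ℤ) - 1)
    (j j' : ℤ) (hj : j ∈ Finset.Icc (-(n : ℤ)) n) (hj' : j' ∈ Finset.Icc (-(n : ℤ)) n)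
    (hwj : w j = i) (hwj' : w j' = i + 1) (hpar : |j| % 2 = |j'| % 2)
    (hmin : ∀ i' : ℤ, 0 ≤ i' → i' < i →
      ∀ k k' : ℤ, k ∈ Finset.Icc (-(n : ℤ)) n → k' ∈ Finset.Icc (-(n : ℤ)) n →
        w k = i' → w k' = i' + 1 → |k| % 2 ≠ |k'| % 2) :
    Lstat n (fun x => sgen i (w x)) = Lstat n w ∧
    Dset n (fun x => sgen i (w x)) = Dset n w ∧
    (lenStat n (fun x => sgen i (w x)) = lenStat n w + 1 ∨
      lenStat n w = lenStat n (fun x => sgen i (w x)) + 1) ∧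
    (fun x => sgen i (sgen i (w x))) = w ∧
    (fun x => sgen i (w x)) ≠ w :=
  star_involution_general n w hw i hi0 j j' hj hj' hwj hwj' hpar
end

section
/- Let w ∈ C_{n,0} be an ascending even chessboard element (w(1) < ⋯ < w(n) and |w(j)| ≡ j mod 2 for all j) and let j ∈ [⌊n/2⌋]. Then |w(2j)| − |w(2j−1)| is odd. Moreover: if w(2j) > 0 then |w(2j)| > |w(2j−1)| and w⁻¹(e) < 0 for every integer e with |w(2j−1)| < e < |w(2j)|; and if w(2j) < 0 then |w(2j−1)| − |w(2j)| = 1. -/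
open Finset Polynomial

/-!
On `[1, n]` the map `|w|` is a bijection onto `[1, n]`, and since `w` is increasing there, a value
strictly between `w i` and `w (i + 1)` can only be taken at a negative position. If `w (2j) > 0`
this gives the intermediate values; moreover `w (2j - 1) < -1` is impossible because one of `±1`
would lie strictly between `w (2j - 1)` and `w (2j)`, and `|w (2j)|` is even, hence `≠ 1`.
If `w (2j) = -v < 0` with a gap below it, the value `v + 1` sits at some position `m > 2j`, and the
positions `i ∈ [1, n]` with `|w i| ≤ v` are exactly `[2j, m - 1]`; counting gives `m = 2j + v`,
which contradicts the chessboard parity at `m`.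
-/

lemma StrictMonoOn.apply_notMem_Ioo_apply_add_one {α : Type*} [Preorder α] {f : ℤ → α}
    {s : Set ℤ} (hf : StrictMonoOn f s) {i k : ℤ} (hi : i ∈ s) (hi' : i + 1 ∈ s) (hk : k ∈ s) :
    f k ∉ Set.Ioo (f i) (f (i + 1)) := by
  rintro ⟨hik, hki⟩
  have := (hf.lt_iff_lt hi hk).1 hik
  have := (hf.lt_iff_lt hk hi').1 hki
  omega

namespace IsSigned

variable {n : ℕ} {w : ℤ → ℤ}

lemma apply_ne_zero_s14 (hw : IsSigned n w) {i : ℤ} (hi : i ∈ Set.Icc (-(n : ℤ)) n) (hi0 : i ≠ 0) :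
    w i ≠ 0 := fun h =>
  hi0 <| hw.2.injOn hi (⟨by omega, by omega⟩ : (0 : ℤ) ∈ Set.Icc (-(n : ℤ)) n)
    (h.trans hw.apply_zero.symm)

lemma bijOn_abs (hw : IsSigned n w) :
    Set.BijOn (fun i => |w i|) (Set.Icc 1 n) (Set.Icc 1 n) := by
  refine ⟨fun i hi => ?_, fun a ha b hb hab => ?_, fun e he => ?_⟩
  · have hwi := hw.2.mapsTo (⟨by linarith [hi.1], hi.2⟩ : i ∈ Set.Icc (-(n : ℤ)) n)
    have := hw.apply_ne_zero_s14 (⟨by linarith [hi.1], hi.2⟩ : i ∈ Set.Icc (-(n : ℤ)) n)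
      (by linarith [hi.1])
    exact ⟨Int.one_le_abs this, abs_le.2 hwi⟩
  · have hmem {x : ℤ} (hx : x ∈ Set.Icc (1 : ℤ) n) : x ∈ Set.Icc (-(n : ℤ)) n ∧
        -x ∈ Set.Icc (-(n : ℤ)) n := ⟨⟨by linarith [hx.1], hx.2⟩, ⟨by linarith [hx.2], by
          linarith [hx.1]⟩⟩
    rcases abs_eq_abs.1 hab with h | h
    · exact hw.2.injOn (hmem ha).1 (hmem hb).1 h
    · have := hw.2.injOn (hmem ha).1 (hmem hb).2 (h.trans (hw.1 b).symm)
      linarith [ha.1, hb.1]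
  · obtain ⟨k, hk, hwk⟩ := hw.2.surjOn (⟨by linarith [he.1], he.2⟩ : e ∈ Set.Icc (-(n : ℤ)) n)
    have hk0 : k ≠ 0 := by
      rintro rfl
      rw [hw.apply_zero] at hwk
      linarith [he.1]
    refine ⟨|k|, ⟨Int.one_le_abs hk0, abs_le.2 hk⟩, ?_⟩
    rcases abs_choice k with h | h <;>
      simp only [h, hw.1, abs_neg, hwk, abs_of_pos (show (0 : ℤ) < e by linarith [he.1])]

lemma card_filter_abs_apply_le (hw : IsSigned n w) {v : ℤ} (hv : 0 ≤ v) (hvn : v ≤ n) :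
    #{i ∈ Icc (1 : ℤ) n | |w i| ≤ v} = v.toNat := by
  have hcard : #(Icc (1 : ℤ) v) = v.toNat := by rw [Int.card_Icc]; omega
  rw [← hcard]
  refine Finset.card_nbij (fun i => |w i|) (fun i hi => ?_) (fun a ha b hb => ?_) (fun e he => ?_)
  · simp only [coe_filter, coe_Icc, mem_Icc, Set.mem_Icc, Set.mem_ofPred_eq] at hi ⊢
    exact ⟨(hw.bijOn_abs.mapsTo hi.1).1, hi.2⟩
  · simp only [coe_filter, mem_Icc, Set.mem_ofPred_eq] at ha hb
    exact hw.bijOn_abs.injOn ha.1 hb.1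
  · simp only [coe_Icc, Set.mem_Icc] at he
    obtain ⟨i, hi, hwi⟩ := hw.bijOn_abs.surjOn (⟨he.1, he.2.trans hvn⟩ : e ∈ Set.Icc (1 : ℤ) n)
    refine ⟨i, ?_, hwi⟩
    simp only [coe_filter, mem_Icc, Set.mem_ofPred_eq]
    exact ⟨hi, hwi.trans_le he.2⟩

lemma exists_neg_apply_eq_of_mem_Ioo (hw : IsSigned n w)
    (hasc : StrictMonoOn w (Set.Icc 1 (n : ℤ))) {i e : ℤ} (hi : 1 ≤ i) (hin : i + 1 ≤ n)
    (he : e ∈ Set.Ioo (w i) (w (i + 1))) (he0 : e ≠ 0) :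
    ∃ k : ℤ, -(n : ℤ) ≤ k ∧ k ≤ -1 ∧ w k = e := by
  have hwi := hw.2.mapsTo (⟨by omega, by omega⟩ : i ∈ Set.Icc (-(n : ℤ)) n)
  have hwi' := hw.2.mapsTo (⟨by omega, by omega⟩ : i + 1 ∈ Set.Icc (-(n : ℤ)) n)
  obtain ⟨k, hk, rfl⟩ := hw.2.surjOn
    (⟨by linarith [he.1, hwi.1], by linarith [he.2, hwi'.2]⟩ : e ∈ Set.Icc (-(n : ℤ)) n)
  refine ⟨k, hk.1, ?_, rfl⟩
  by_contra! hk0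
  have hk1 : 1 ≤ k := by
    by_contra! hk1
    exact he0 (by rw [show k = 0 by omega, hw.apply_zero])
  exact hasc.apply_notMem_Ioo_apply_add_one ⟨hi, by omega⟩ ⟨by omega, hin⟩ ⟨hk1, hk.2⟩ he

lemma apply_add_one_le_one_of_apply_lt_neg_one (hw : IsSigned n w)
    (hasc : StrictMonoOn w (Set.Icc 1 (n : ℤ))) {i : ℤ} (hi : 1 ≤ i) (hin : i + 1 ≤ n)
    (h : w i < -1) : w (i + 1) ≤ 1 := by
  by_contra! h'
  obtain ⟨k, hk, hwk⟩ := hw.bijOn_abs.surjOn (⟨le_rfl, by omega⟩ : (1 : ℤ) ∈ Set.Icc 1 (n : ℤ))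
  refine hasc.apply_notMem_Ioo_apply_add_one ⟨hi, by omega⟩ ⟨by omega, hin⟩ hk ?_
  rcases abs_eq (zero_le_one' ℤ) |>.1 hwk with h1 | h1 <;> exact ⟨by omega, by omega⟩

lemma eq_sub_of_apply_eq_one_sub (hw : IsSigned n w)
    (hasc : StrictMonoOn w (Set.Icc 1 (n : ℤ))) {b m : ℤ} (hb : b ∈ Set.Icc (1 : ℤ) n)
    (hm : m ∈ Set.Icc (1 : ℤ) n) (hwb : w b < 0) (hwm : w m = 1 - w b) : m = b - w b := by
  have hbn := hw.2.mapsTo (⟨by linarith [hb.1], hb.2⟩ : b ∈ Set.Icc (-(n : ℤ)) n)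
  have hbm : b < m := (hasc.lt_iff_lt hb hm).1 (by omega)
  have hS : {i ∈ Icc (1 : ℤ) n | |w i| ≤ -w b} = Icc b (m - 1) := by
    ext i
    simp only [mem_filter, mem_Icc, abs_le, neg_neg]
    constructor
    · rintro ⟨hi, hlo, hhi⟩
      exact ⟨(hasc.le_iff_le hb hi).1 hlo, by
        by_contra! him; linarith [(hasc.le_iff_le hm hi).2 (by omega)]⟩
    · rintro ⟨hbi, him⟩
      have hi : i ∈ Set.Icc (1 : ℤ) n := ⟨by linarith [hb.1], by linarith [hm.2]⟩
      exact ⟨hi, (hasc.le_iff_le hb hi).2 hbi, by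
        linarith [(hasc.lt_iff_lt hi hm).2 (by omega : i < m)]⟩
  have hcard := hw.card_filter_abs_apply_le (v := -w b) (by omega) (by linarith [hbn.1])
  rw [hS, Int.card_Icc] at hcard
  omega

end IsSigned

/-- Structure of ascending even chessboard elements: for each pair of adjacent
columns `(2j−1, 2j)`, the difference `|w(2j)| − |w(2j−1)|` is odd; if
`w(2j) > 0` then `|w(2j−1)| < |w(2j)|` and all rows strictly in between carry
negative entries; if `w(2j) < 0` then `|w(2j−1)| − |w(2j)| = 1`. -/
theorem ascending_chessboard_structure (n : ℕ) (w : ℤ → ℤ) (hw : IsSigned n w)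
    (hasc : ∀ i j : ℤ, 1 ≤ i → i < j → j ≤ (n : ℤ) → w i < w j)
    (hchess : ∀ j ∈ Finset.Icc (1 : ℤ) n, |w j| % 2 = j % 2)
    (j : ℤ) (hj1 : 1 ≤ j) (hj2 : 2 * j ≤ (n : ℤ)) :
    Odd (|w (2 * j)| - |w (2 * j - 1)|) ∧
    (0 < w (2 * j) →
      |w (2 * j - 1)| < |w (2 * j)| ∧
      ∀ e : ℤ, |w (2 * j - 1)| < e → e < |w (2 * j)| →
        ∃ k : ℤ, -(n : ℤ) ≤ k ∧ k ≤ -1 ∧ w k = e) ∧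
    (w (2 * j) < 0 → |w (2 * j - 1)| - |w (2 * j)| = 1) := by
  have hmono : StrictMonoOn w (Set.Icc 1 (n : ℤ)) := fun a ha b hb hab => hasc a b ha.1 hab hb.2
  have ha : 2 * j - 1 ∈ Set.Icc (1 : ℤ) n := ⟨by omega, by omega⟩
  have hb : 2 * j ∈ Set.Icc (1 : ℤ) n := ⟨by omega, by omega⟩
  have hpar_a := hchess (2 * j - 1) (by simpa using ha)
  have hpar_b := hchess (2 * j) (by simpa using hb)
  have hab : w (2 * j - 1) < w (2 * j) := hmono ha hb (by omega)
  have hmid (e : ℤ) (he : e ∈ Set.Ioo (w (2 * j - 1)) (w (2 * j))) (he0 : e ≠ 0) :=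
    hw.exists_neg_apply_eq_of_mem_Ioo hmono (i := 2 * j - 1) (by omega) (by omega)
      (by rwa [sub_add_cancel]) he0
  refine ⟨Int.odd_iff.2 (by omega), fun hpos => ⟨?_, fun e hae heb => ?_⟩, fun hneg => ?_⟩
  · have hb2 : 2 ≤ w (2 * j) := by rw [abs_of_pos hpos] at hpar_b; omega
    have hlow : ¬w (2 * j - 1) < -1 := fun h => by
      have := hw.apply_add_one_le_one_of_apply_lt_neg_one hmono (by omega) (by omega) h
      rw [sub_add_cancel] at this
      omega
    have hwa0 := hw.apply_ne_zero_s14 (⟨by omega, by omega⟩ : 2 * j - 1 ∈ Set.Icc (-(n : ℤ)) n)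
      (by omega)
    rw [abs_of_pos hpos]
    rcases abs_choice (w (2 * j - 1)) with h | h <;> rw [h] <;> omega
  · rw [abs_of_pos hpos] at heb
    exact hmid e ⟨(le_abs_self _).trans_lt hae, heb⟩ (by linarith [abs_nonneg (w (2 * j - 1))])
  · rw [abs_of_neg hneg, abs_of_neg (hab.trans hneg)]
    by_contra hgap
    obtain ⟨k, hk, hk1, hwk⟩ := hmid (w (2 * j) - 1) ⟨by omega, by omega⟩ (by omega)
    have hm : -k ∈ Set.Icc (1 : ℤ) n := ⟨by omega, by omega⟩
    have hwm : w (-k) = 1 - w (2 * j) := by rw [hw.1, hwk]; ring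
    have hm_eq := hw.eq_sub_of_apply_eq_one_sub hmono hb hm hneg hwm
    have hpar_m := hchess (-k) (by simpa using hm)
    rw [hwm, abs_of_pos (by omega)] at hpar_m
    omega
end
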